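/- arXiv:1106.3622 — 4 statements merged into one kernel-verified Lean document; each statement's English description precedes it below -/
import Mathlib

section
/- Let G be the visibility graph of a set of n points in the plane with at most ℓ collinear (where ℓ ≥ 2 and the points are not all collinear). Then G is ⌈(n−1)/(ℓ−1)⌉-edge-connected. Moreover, between each pair of distinct vertices of G there exist ⌈(n−1)/(ℓ−1)⌉ pairwise edge-disjoint paths each of which has at most one bend, i.e., all vertices of each path lie on the union of at most two line segments sharing an endpoint, traversed in order along those segments. -/
/-- Two distinct points of the plane are visible with respect to a finite point set `P`
if no point of `P` lies in the open line segment between them. -/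
def VisAdj (P : Finset (ℝ × ℝ)) (x y : ℝ × ℝ) : Prop :=
  x ≠ y ∧ ∀ p ∈ P, p ∉ openSegment ℝ x y

/-- The visibility graph of a finite point set `P` in the plane: vertices are the points
of `P`, two distinct points being adjacent iff the open segment between them contains no
point of `P`. -/
def visibilityGraph (P : Finset (ℝ × ℝ)) : SimpleGraph {p : ℝ × ℝ // p ∈ P} where
  Adj u v := VisAdj P u.1 v.1
  symm := by
    constructor
    rintro u v ⟨hne, h⟩
    refine ⟨hne.symm, fun p hp => ?_⟩
    rw [openSegment_symm]
    exact h p hp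
  loopless := by constructor; rintro u ⟨hne, -⟩; exact hne rfl

/-- The point set `P` has at most `ℓ` collinear points: every collinear subset of `P`
has at most `ℓ` points. -/
def AtMostCollinear (P : Finset (ℝ × ℝ)) (ℓ : ℕ) : Prop :=
  ∀ S : Finset (ℝ × ℝ), S ⊆ P → Collinear ℝ (S : Set (ℝ × ℝ)) → S.card ≤ ℓ

/-- A graph is `k`-edge-connected if it has more than one vertex and remains connected
after deletion of any fewer than `k` edges. -/
def IsKEdgeConnected {V : Type*} (G : SimpleGraph V) (k : ℕ) : Prop :=
  1 < Nat.card V ∧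
    ∀ F : Set (Sym2 V), F ⊆ G.edgeSet → Nat.card F < k → (G.deleteEdges F).Connected

/-- The points of the list `L` all lie on the segment `xy`, in order from `x` to `y`. -/
def InOrderOnSegment (x y : ℝ × ℝ) (L : List (ℝ × ℝ)) : Prop :=
  (∀ p ∈ L, p ∈ segment ℝ x y) ∧ List.Chain' (fun p q => q ∈ segment ℝ p y) L

/-- A walk in a visibility graph has at most one bend if all its vertices lie, in order,
on the union of two line segments sharing an endpoint `c`: first a segment from the
initial vertex to `c`, then a segment from `c` to the final vertex. -/
def OneBend (P : Finset (ℝ × ℝ)) {u v : {p : ℝ × ℝ // p ∈ P}}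
    (W : (visibilityGraph P).Walk u v) : Prop :=
  ∃ (c : ℝ × ℝ) (L₁ L₂ : List (ℝ × ℝ)),
    W.support.map Subtype.val = L₁ ++ L₂ ∧
    InOrderOnSegment (u : ℝ × ℝ) c L₁ ∧ InOrderOnSegment c (v : ℝ × ℝ) L₂

/-!
Fix distinct `v, w ∈ P`. Walking through the points of `P` on the segment `vw` gives one path;
each point `x` off the line `vw` gives a path with one bend, walking through the points of `P` on
the segments `vx` and `xw`. An edge spans a line, so two of these paths are edge-disjoint as soon
as the lines they run along are distinct: for the bends `x ≠ y` this asks for `vx ≠ vy` and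
`wx ≠ wy`. Such bends form a matching in the bipartite graph between lines through `v` and lines
through `w` that has an edge `vx — wx` for each of the at least `n - ℓ` points `x` off `vw`. A
line holds at most `ℓ - 1` of those points, so this graph has maximum degree `ℓ - 1` and, by
König's theorem, a matching of size at least `(n - ℓ) / (ℓ - 1)`; with the straight path this
gives `⌈(n - 1) / (ℓ - 1)⌉` paths. Edge-connectivity follows: fewer edges than paths cannot
meet every path.
-/

open Finset SimpleGraph Function

theorem exists_matching_of_card_le_card_biUnion_add {ι γ : Type*} [Fintype ι] [DecidableEq γ]
    (t : ι → Finset γ) (D : ℕ) (h : ∀ s : Finset ι, #s ≤ #(s.biUnion t) + D) :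
    ∃ M : Finset (ι × γ), Set.InjOn Prod.fst (M : Set (ι × γ)) ∧
      Set.InjOn Prod.snd (M : Set (ι × γ)) ∧ (∀ p ∈ M, p.2 ∈ t p.1) ∧ Fintype.card ι ≤ #M + D := by
  classical
  -- `D` dummy vertices `Sum.inr n` on the right make Hall's condition hold
  let t' : ι → Finset (γ ⊕ ℕ) := fun i => (t i).disjSum (range D)
  have hall : ∀ s : Finset ι, #s ≤ #(s.biUnion t') := by
    intro s
    rcases s.eq_empty_or_nonempty with rfl | ⟨i₀, hi₀⟩
    · simp
    calc #s ≤ #((s.biUnion t).disjSum (range D)) := by simpa [card_disjSum] using h s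
      _ ≤ #(s.biUnion t') := card_le_card fun z hz => by
        rcases z with c | n
        · obtain ⟨i, hi, hc⟩ := mem_biUnion.1 (inl_mem_disjSum.1 hz)
          exact mem_biUnion.2 ⟨i, hi, inl_mem_disjSum.2 hc⟩
        · exact mem_biUnion.2 ⟨i₀, hi₀, inr_mem_disjSum.2 (inr_mem_disjSum.1 hz)⟩
  obtain ⟨F, hFinj, hFt⟩ := (all_card_le_biUnion_card_iff_exists_injective t').1 hall
  let M := (univ ×ˢ univ.biUnion t).filter fun p => F p.1 = .inl p.2
  have hM : ∀ p ∈ M, F p.1 = .inl p.2 := fun p hp => (mem_filter.1 hp).2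
  refine ⟨M, fun p hp q hq hpq => ?_, fun p hp q hq hpq => ?_, fun p hp => ?_, ?_⟩
  · exact Prod.ext hpq (Sum.inl_injective ((hM p hp).symm.trans (hpq ▸ hM q hq)))
  · exact Prod.ext (hFinj ((hM p hp).trans (hpq ▸ hM q hq).symm)) hpq
  · exact inl_mem_disjSum.1 (hM p hp ▸ hFt p.1)
  calc Fintype.card ι = #((univ : Finset ι).image F) := (card_image_of_injective _ hFinj).symm
    _ ≤ #((M.image Prod.snd).disjSum (range D)) := card_le_card fun z hz => by
        obtain ⟨i, -, rfl⟩ := mem_image.1 hz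
        have hi := hFt i
        rcases hF : F i with c | n <;> rw [hF] at hi
        · have hc := inl_mem_disjSum.1 hi
          refine inl_mem_disjSum.2 (mem_image.2 ⟨(i, c), mem_filter.2 ⟨?_, hF⟩, rfl⟩)
          exact mem_product.2 ⟨mem_univ i, mem_biUnion.2 ⟨i, mem_univ i, hc⟩⟩
        · exact inr_mem_disjSum.2 (inr_mem_disjSum.1 hi)
    _ ≤ #M + D := by
        rw [card_disjSum, card_range]
        exact Nat.add_le_add_right (card_image_le (s := M) (f := Prod.snd)) D

theorem card_le_mul_of_forall_mem_or_mem {β γ : Type*} [DecidableEq β] [DecidableEq γ]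
    {E : Finset (β × γ)} {d : ℕ} (h₁ : ∀ b, #(E.filter (·.1 = b)) ≤ d)
    (h₂ : ∀ c, #(E.filter (·.2 = c)) ≤ d) {B : Finset β} {C : Finset γ}
    (hcover : ∀ e ∈ E, e.1 ∈ B ∨ e.2 ∈ C) : #E ≤ (#B + #C) * d := by
  calc #E ≤ #(B.biUnion (fun b => E.filter (·.1 = b)) ∪
        C.biUnion (fun c => E.filter (·.2 = c))) := card_le_card fun e he => by
          rcases hcover e he with h | h
          · exact mem_union_left _ (mem_biUnion.2 ⟨e.1, h, mem_filter.2 ⟨he, rfl⟩⟩)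
          · exact mem_union_right _ (mem_biUnion.2 ⟨e.2, h, mem_filter.2 ⟨he, rfl⟩⟩)
    _ ≤ #B * d + #C * d := (card_union_le _ _).trans <| add_le_add
        (card_biUnion_le_card_mul _ _ _ fun b _ => h₁ b)
        (card_biUnion_le_card_mul _ _ _ fun c _ => h₂ c)
    _ = (#B + #C) * d := (add_mul _ _ _).symm

/-- König's theorem for the bipartite graph with edge set `E`: maximum degree `d` forces a matching
of `#E / d` edges. -/
theorem exists_matching_card_le_card_mul {β γ : Type*} [DecidableEq β] [DecidableEq γ]
    (E : Finset (β × γ)) (d : ℕ) (h₁ : ∀ b, #(E.filter (·.1 = b)) ≤ d)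
    (h₂ : ∀ c, #(E.filter (·.2 = c)) ≤ d) :
    ∃ M ⊆ E, Set.InjOn Prod.fst (M : Set (β × γ)) ∧ Set.InjOn Prod.snd (M : Set (β × γ)) ∧
      #E ≤ #M * d := by
  classical
  let B := E.image Prod.fst
  let t : B → Finset γ := fun b => (E.filter (·.1 = b.1)).image Prod.snd
  have ht : ∀ b : B, ∀ c, c ∈ t b ↔ (b.1, c) ∈ E := fun b c => by
    simp only [t, mem_image, mem_filter]
    constructor
    · rintro ⟨e, ⟨he, h⟩, rfl⟩
      rwa [← h]
    · exact fun h => ⟨_, ⟨h, rfl⟩, rfl⟩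
  -- `S₀` has maximal deficiency `#S₀ - #N(S₀)`
  obtain ⟨S₀, -, hS₀⟩ := exists_max_image (univ : Finset (Finset B))
    (fun s => (#s : ℤ) - #(s.biUnion t)) univ_nonempty
  obtain ⟨M₀, hfst, hsnd, hM₀t, hM₀card⟩ := exists_matching_of_card_le_card_biUnion_add t
    (#S₀ - #(S₀.biUnion t)) fun s => by have := hS₀ s (mem_univ s); omega
  have hval : Injective fun p : B × γ => (p.1.1, p.2) := fun p q h => by
    simp only [Prod.mk.injEq] at h; exact Prod.ext (Subtype.ext h.1) h.2
  refine ⟨M₀.image fun p => (p.1.1, p.2), fun e he => ?_, ?_, ?_, ?_⟩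
  · obtain ⟨p, hp, rfl⟩ := mem_image.1 he
    exact (ht _ _).1 (hM₀t p hp)
  · rw [coe_image]
    exact Set.InjOn.image_of_comp fun p hp q hq h => hfst hp hq (Subtype.ext h)
  · rw [coe_image]
    exact Set.InjOn.image_of_comp hsnd
  -- `(B \ S₀) ∪ N(S₀)` covers every edge
  have hcover := card_le_mul_of_forall_mem_or_mem h₁ h₂ (B := (univ \ S₀).map (.subtype _))
    (C := S₀.biUnion t) fun e he => by
      have heB : e.1 ∈ B := mem_image_of_mem _ he
      by_cases hS : ⟨e.1, heB⟩ ∈ S₀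
      · exact .inr (mem_biUnion.2 ⟨_, hS, (ht _ _).2 he⟩)
      · exact .inl (mem_map.2 ⟨⟨e.1, heB⟩, by simpa using hS, rfl⟩)
  have hsdiff : #((univ \ S₀).map (.subtype _)) = #B - #S₀ := by
    rw [card_map, card_sdiff_of_subset (subset_univ _), card_univ, Fintype.card_coe]
  rw [card_image_of_injective _ hval]
  have hS₀B : #S₀ ≤ #B := by simpa using card_le_univ S₀
  have hempty := hS₀ ∅ (mem_univ _)
  simp only [card_empty, biUnion_empty, Nat.cast_zero, sub_zero] at hempty
  rw [Fintype.card_coe] at hM₀card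
  exact hcover.trans (Nat.mul_le_mul_right d (by omega))

theorem exists_subset_injOn_injOn_card_le_mul {α β γ : Type*} [DecidableEq β] [DecidableEq γ]
    (Q : Finset α) (f : α → β) (g : α → γ) (d : ℕ) (hf : ∀ b, #(Q.filter (f · = b)) ≤ d)
    (hg : ∀ c, #(Q.filter (g · = c)) ≤ d) (hfg : Set.InjOn (fun x => (f x, g x)) Q) :
    ∃ M ⊆ Q, Set.InjOn f (M : Set α) ∧ Set.InjOn g (M : Set α) ∧ #Q ≤ #M * d := by
  classical
  let φ := fun x => (f x, g x)
  obtain ⟨E, hEQ, hfst, hsnd, hcard⟩ := exists_matching_card_le_card_mul (Q.image φ) d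
    (fun b => by rw [filter_image]; exact card_image_le.trans (hf b))
    (fun c => by rw [filter_image]; exact card_image_le.trans (hg c))
  let M := Q.filter (φ · ∈ E)
  have hM : ∀ x ∈ M, x ∈ Q ∧ φ x ∈ E := fun x hx => mem_filter.1 hx
  have hEM : E ⊆ M.image φ := fun e he => by
    obtain ⟨x, hx, rfl⟩ := mem_image.1 (hEQ he)
    exact mem_image_of_mem _ (mem_filter.2 ⟨hx, he⟩)
  refine ⟨M, filter_subset _ _, fun x hx y hy h => ?_, fun x hx y hy h => ?_, ?_⟩
  · exact hfg (hM x hx).1 (hM y hy).1 (hfst (hM x hx).2 (hM y hy).2 h)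
  · exact hfg (hM x hx).1 (hM y hy).1 (hsnd (hM x hx).2 (hM y hy).2 h)
  calc #Q = #(Q.image φ) := (card_image_of_injOn hfg).symm
    _ ≤ #E * d := hcard
    _ ≤ #M * d := Nat.mul_le_mul_right d ((card_le_card hEM).trans card_image_le)

section Lines

variable {k V Pt : Type*} [Field k] [AddCommGroup V] [Module k V] [AddTorsor V Pt]

theorem collinear_of_subset_affineSpan_pair {s : Set Pt} {a b : Pt} (h : s ⊆ line[k, a, b]) :
    Collinear k s :=
  (collinear_iff_exists_forall_eq_smul_vadd s).2 ⟨a, b -ᵥ a, fun p hp => by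
    obtain ⟨r, rfl⟩ := mem_affineSpan_pair_iff_exists_lineMap_eq.1 (h hp)
    exact ⟨r, AffineMap.lineMap_apply a b r⟩⟩

theorem mem_affineSpan_pair_of_right_mem {v w x : Pt} (hvw : v ≠ w) (hw : w ∈ line[k, v, x]) :
    x ∈ line[k, v, w] :=
  affineSpan_pair_eq_of_right_mem_of_ne hw hvw.symm ▸ right_mem_affineSpan_pair k v x

theorem eq_of_mem_affineSpan_pair_of_mem_affineSpan_pair {v w x p : Pt} (hvw : v ≠ w)
    (hx : x ∉ line[k, v, w]) (hpv : p ∈ line[k, v, x]) (hpw : p ∈ line[k, w, x]) : p = x := by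
  by_contra hpx
  have hv := affineSpan_pair_eq_of_mem_of_mem_of_ne (right_mem_affineSpan_pair k v x) hpv
    (Ne.symm hpx)
  have hw := affineSpan_pair_eq_of_mem_of_mem_of_ne (right_mem_affineSpan_pair k w x) hpw
    (Ne.symm hpx)
  exact hx (mem_affineSpan_pair_of_right_mem hvw (hv ▸ hw ▸ left_mem_affineSpan_pair k w x))

theorem affineSpan_pair_ne_of_notMem {v w x y : Pt} (hvw : v ≠ w) (hx : x ∉ line[k, v, w]) :
    line[k, v, x] ≠ line[k, w, y] := fun h =>
  hx (mem_affineSpan_pair_of_right_mem hvw (h ▸ left_mem_affineSpan_pair k w y))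

end Lines

section Visibility

variable {P : Finset (ℝ × ℝ)}

theorem exists_visAdj_mem_segment {a b : ℝ × ℝ} (hb : b ∈ P) (hab : a ≠ b) :
    ∃ p ∈ P, p ∈ segment ℝ a b ∧ VisAdj P a p := by
  have hclosed : IsClosed ((P.erase a : Finset (ℝ × ℝ)) : Set (ℝ × ℝ)) :=
    (P.erase a).finite_toSet.isClosed
  obtain ⟨p, hp, hapb, hvis⟩ :=
    hclosed.exists_wbtw_isVisible (mem_coe.2 (mem_erase.2 ⟨hab.symm, hb⟩)) a
  obtain ⟨hpa, hpP⟩ := mem_erase.1 hp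
  refine ⟨p, hpP, hapb.mem_segment, hpa.symm, fun q hq hqap => ?_⟩
  have hqa : q ≠ a := fun h => hpa (left_mem_openSegment_iff.1 (h ▸ hqap)).symm
  have hqp : q ≠ p := fun h => hpa (right_mem_openSegment_iff.1 (h ▸ hqap)).symm
  exact hvis (mem_coe.2 (mem_erase.2 ⟨hqa, hq⟩))
    ⟨mem_segment_iff_wbtw.1 (openSegment_subset_segment _ _ _ hqap), hqa, hqp⟩

theorem InOrderOnSegment.cons_cons {x y p : ℝ × ℝ} {L : List (ℝ × ℝ)}
    (h : InOrderOnSegment p y (p :: L)) (hp : p ∈ segment ℝ x y) :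
    InOrderOnSegment x y (x :: p :: L) := by
  have hsub : segment ℝ p y ⊆ segment ℝ x y :=
    (convex_segment x y).segment_subset hp (right_mem_segment ℝ x y)
  refine ⟨?_, List.isChain_cons_cons.2 ⟨hp, h.2⟩⟩
  rintro q (_ | ⟨_, hq⟩)
  · exact left_mem_segment ℝ x y
  · exact hsub (h.1 q hq)

theorem InOrderOnSegment.tail {x y : ℝ × ℝ} {L : List (ℝ × ℝ)} (h : InOrderOnSegment x y L) :
    InOrderOnSegment x y L.tail :=
  ⟨fun p hp => h.1 p (List.mem_of_mem_tail hp), h.2.tail⟩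

theorem exists_isPath_inOrderOnSegment (a b : {p : ℝ × ℝ // p ∈ P}) :
    ∃ W : (visibilityGraph P).Walk a b,
      W.IsPath ∧ InOrderOnSegment a b (W.support.map Subtype.val) := by
  classical
  induction hn : #(P.filter (· ∈ segment ℝ (a : ℝ × ℝ) b)) using Nat.strong_induction_on
    generalizing a with
  | _ n ih =>
    by_cases hab : a = b
    · subst hab
      exact ⟨.nil, .nil, by simp, .singleton _⟩
    -- step to the first point `p` of `P` seen from `a` towards `b`
    obtain ⟨p, hpP, hp, hap⟩ := exists_visAdj_mem_segment b.2 (Subtype.val_injective.ne hab)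
    change (visibilityGraph P).Adj a ⟨p, hpP⟩ at hap
    have ha : (a : ℝ × ℝ) ∉ segment ℝ p b := fun h =>
      hap.1 <| (wbtw_swap_left_iff ℝ (b : ℝ × ℝ)).1
        ⟨mem_segment_iff_wbtw.1 hp, mem_segment_iff_wbtw.1 h⟩
    have hlt : #(P.filter (· ∈ segment ℝ p b)) < n := hn ▸ card_lt_card (by
      refine ssubset_iff_of_subset (fun q hq => ?_) |>.2 ⟨a, ?_, ?_⟩
      · simp only [mem_filter] at hq ⊢
        exact ⟨hq.1,
          (convex_segment (a : ℝ × ℝ) b).segment_subset hp (right_mem_segment ..) hq.2⟩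
      · exact mem_filter.2 ⟨a.2, left_mem_segment ..⟩
      · exact fun h => ha (mem_filter.1 h).2)
    obtain ⟨W, hW, hWseg⟩ := ih _ hlt ⟨p, hpP⟩ rfl
    refine ⟨.cons hap W, (Walk.cons_isPath_iff _ _).2 ⟨hW, fun h => ha ?_⟩, ?_⟩
    · exact hWseg.1 _ (List.mem_map_of_mem h)
    · rw [Walk.support_cons, List.map_cons, ← Walk.cons_tail_support, List.map_cons]
      rw [← Walk.cons_tail_support, List.map_cons] at hWseg
      exact hWseg.cons_cons hp

def edgeLine (e : Sym2 (ℝ × ℝ)) : AffineSubspace ℝ (ℝ × ℝ) :=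
  Sym2.lift ⟨fun p q => line[ℝ, p, q], fun p q => by simp only [Set.pair_comm]⟩ e

theorem edgeLine_eq_of_mem_edges {a b : ℝ × ℝ} {u v : {p : ℝ × ℝ // p ∈ P}}
    {W : (visibilityGraph P).Walk u v} (hW : InOrderOnSegment a b (W.support.map Subtype.val))
    {e : Sym2 {p : ℝ × ℝ // p ∈ P}} (he : e ∈ W.edges) :
    edgeLine (e.map Subtype.val) = line[ℝ, a, b] := by
  induction e using Sym2.ind with
  | _ p q =>
    have hline : ∀ z ∈ W.support, (z : ℝ × ℝ) ∈ line[ℝ, a, b] := fun z hz =>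
      (mem_segment_iff_wbtw.1 (hW.1 _ (List.mem_map_of_mem hz))).mem_affineSpan
    exact affineSpan_pair_eq_of_mem_of_mem_of_ne (hline p (W.fst_mem_support_of_mem_edges he))
      (hline q (W.snd_mem_support_of_mem_edges he)) (W.adj_of_mem_edges he).1

theorem oneBend_of_inOrderOnSegment {v w : {p : ℝ × ℝ // p ∈ P}}
    {W : (visibilityGraph P).Walk v w}
    (hW : InOrderOnSegment v w (W.support.map Subtype.val)) : OneBend P W :=
  ⟨w, _, [], (List.append_nil _).symm, hW, by simp, .nil⟩

theorem SimpleGraph.Walk.IsPath.append {V : Type*} {G : SimpleGraph V} {u v w : V}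
    {p : G.Walk u v} {q : G.Walk v w} (hp : p.IsPath) (hq : q.IsPath)
    (h : ∀ x ∈ p.support, x ∈ q.support → x = v) : (p.append q).IsPath := by
  have hq' := hq.support_nodup
  rw [← Walk.cons_tail_support, List.nodup_cons] at hq'
  rw [Walk.isPath_def, Walk.support_append]
  refine List.nodup_append.2 ⟨hp.support_nodup, hq'.2, fun x hx y hy hxy => ?_⟩
  subst hxy
  exact hq'.1 (h x hx (List.mem_of_mem_tail hy) ▸ hy)

theorem exists_isPath_oneBend_via {v w x : {p : ℝ × ℝ // p ∈ P}} (hvw : (v : ℝ × ℝ) ≠ w)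
    (hx : (x : ℝ × ℝ) ∉ line[ℝ, (v : ℝ × ℝ), (w : ℝ × ℝ)]) :
    ∃ W : (visibilityGraph P).Walk v w, W.IsPath ∧ OneBend P W ∧ ∀ e ∈ W.edges,
      edgeLine (e.map Subtype.val) ∈
        ({line[ℝ, (v : ℝ × ℝ), (x : ℝ × ℝ)], line[ℝ, (w : ℝ × ℝ), (x : ℝ × ℝ)]} : Set _) := by
  obtain ⟨W₁, hW₁, hW₁seg⟩ := exists_isPath_inOrderOnSegment v x
  obtain ⟨W₂, hW₂, hW₂seg⟩ := exists_isPath_inOrderOnSegment x w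
  refine ⟨W₁.append W₂, hW₁.append hW₂ fun z hz₁ hz₂ => Subtype.ext ?_, ?_, fun e he => ?_⟩
  · have hline : ∀ {a b : ℝ × ℝ} {L}, InOrderOnSegment a b L → z.1 ∈ L →
        z.1 ∈ line[ℝ, a, b] :=
      fun h hz => (mem_segment_iff_wbtw.1 (h.1 _ hz)).mem_affineSpan
    refine eq_of_mem_affineSpan_pair_of_mem_affineSpan_pair hvw hx
      (hline hW₁seg (List.mem_map_of_mem hz₁)) ?_
    rw [Set.pair_comm]
    exact hline hW₂seg (List.mem_map_of_mem hz₂)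
  · refine ⟨x, _, _, by rw [Walk.support_append, List.map_append], hW₁seg, ?_⟩
    rw [List.map_tail]
    exact hW₂seg.tail
  rcases List.mem_append.1 (Walk.edges_append W₁ W₂ ▸ he) with he | he
  · exact .inl (edgeLine_eq_of_mem_edges hW₁seg he)
  · exact .inr ((edgeLine_eq_of_mem_edges hW₂seg he).trans (by rw [Set.pair_comm]))

theorem exists_oneBend_paths_of_injOn_affineSpan_pair {v w : {p : ℝ × ℝ // p ∈ P}}
    (hvw : (v : ℝ × ℝ) ≠ w) {X : Finset (ℝ × ℝ)} (hXP : X ⊆ P)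
    (hX : ∀ x ∈ X, x ∉ line[ℝ, (v : ℝ × ℝ), (w : ℝ × ℝ)])
    (hXv : Set.InjOn (fun x => line[ℝ, (v : ℝ × ℝ), x]) X)
    (hXw : Set.InjOn (fun x => line[ℝ, (w : ℝ × ℝ), x]) X) :
    ∃ f : Option X → (visibilityGraph P).Walk v w, (∀ i, (f i).IsPath ∧ OneBend P (f i)) ∧
      Pairwise fun i j => List.Disjoint (f i).edges (f j).edges := by
  obtain ⟨W₀, hW₀, hW₀seg⟩ := exists_isPath_inOrderOnSegment v w
  choose W hW using fun x : X =>
    exists_isPath_oneBend_via (x := ⟨x, hXP x.2⟩) hvw (hX x x.2)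
  -- the lines carrying the edges of each path; distinct paths use disjoint sets of lines
  let lines : Option X → Set (AffineSubspace ℝ (ℝ × ℝ)) := fun i =>
    i.elim {line[ℝ, (v : ℝ × ℝ), (w : ℝ × ℝ)]}
      fun x => {line[ℝ, (v : ℝ × ℝ), (x : ℝ × ℝ)], line[ℝ, (w : ℝ × ℝ), (x : ℝ × ℝ)]}
  have hlines : ∀ i, ∀ e ∈ (i.elim W₀ W).edges, edgeLine (e.map Subtype.val) ∈ lines i := by
    rintro (_ | x) e he
    · exact edgeLine_eq_of_mem_edges hW₀seg he
    · exact (hW x).2.2 e he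
  have hoff : ∀ x : X, line[ℝ, (v : ℝ × ℝ), (w : ℝ × ℝ)] ∉ lines (some x) := by
    rintro x (h | h) <;> exact hX x x.2 (h ▸ right_mem_affineSpan_pair ..)
  have hdisj : Pairwise (Disjoint on lines) := by
    rintro (_ | x) (_ | y) hxy
    · exact absurd rfl hxy
    · exact Set.disjoint_singleton_left.2 (hoff y)
    · exact Set.disjoint_singleton_right.2 (hoff x)
    have hxy' : (x : ℝ × ℝ) ≠ y := fun h => hxy (congrArg some (Subtype.ext h))
    simp only [lines, Option.elim, Set.disjoint_insert_left, Set.disjoint_singleton_left,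
      Set.mem_insert_iff, Set.mem_singleton_iff, not_or]
    exact ⟨⟨hXv.ne x.2 y.2 hxy', affineSpan_pair_ne_of_notMem hvw (hX x x.2)⟩,
      (affineSpan_pair_ne_of_notMem hvw (hX y y.2)).symm, hXw.ne x.2 y.2 hxy'⟩
  refine ⟨fun i => i.elim W₀ W, ?_, fun i j hij e hei hej =>
    (hdisj hij).ne_of_mem (hlines i e hei) (hlines j e hej) rfl⟩
  rintro (_ | x)
  · exact ⟨hW₀, oneBend_of_inOrderOnSegment hW₀seg⟩
  · exact ⟨(hW x).1, (hW x).2.1⟩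

end Visibility

section Counting

variable {P : Finset (ℝ × ℝ)} {ℓ : ℕ}

theorem AtMostCollinear.card_le_of_subset_affineSpan_pair (hcol : AtMostCollinear P ℓ)
    {S : Finset (ℝ × ℝ)} (hSP : S ⊆ P) {a b : ℝ × ℝ}
    (hS : (S : Set (ℝ × ℝ)) ⊆ line[ℝ, a, b]) : #S ≤ ℓ :=
  hcol S hSP (collinear_of_subset_affineSpan_pair hS)

theorem AtMostCollinear.two_le (hcol : AtMostCollinear P ℓ) {a b : ℝ × ℝ} (ha : a ∈ P)
    (hb : b ∈ P) (hab : a ≠ b) : 2 ≤ ℓ := by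
  classical
  simpa [card_pair hab] using hcol {a, b} (insert_subset ha (singleton_subset_iff.2 hb))
    (by simpa using collinear_pair ℝ a b)

open Classical in
theorem AtMostCollinear.card_filter_affineSpan_pair_eq_le (hcol : AtMostCollinear P ℓ)
    {z : ℝ × ℝ} (hz : z ∈ P) {S : Finset (ℝ × ℝ)} (hSP : S ⊆ P) (hzS : z ∉ S)
    (L : AffineSubspace ℝ (ℝ × ℝ)) : #(S.filter (line[ℝ, z, ·] = L)) ≤ ℓ - 1 := by
  rcases (S.filter (line[ℝ, z, ·] = L)).eq_empty_or_nonempty with h | ⟨x₀, hx₀⟩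
  · simp [h]
  have hL : line[ℝ, z, x₀] = L := (mem_filter.1 hx₀).2
  have hcard := hcol.card_le_of_subset_affineSpan_pair (a := z) (b := x₀)
    (S := insert z (S.filter (line[ℝ, z, ·] = L)))
    (insert_subset hz ((filter_subset _ _).trans hSP)) fun y hy => by
      rcases Finset.mem_insert.1 hy with rfl | hy
      · exact left_mem_affineSpan_pair ..
      · rw [hL, ← (mem_filter.1 hy).2]
        exact right_mem_affineSpan_pair ..
  rw [card_insert_of_notMem fun h => hzS (mem_filter.1 h).1] at hcard
  omega

theorem AtMostCollinear.exists_bend_points (hcol : AtMostCollinear P ℓ) {v w : ℝ × ℝ}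
    (hv : v ∈ P) (hw : w ∈ P) (hvw : v ≠ w) :
    ∃ X ⊆ P, (∀ x ∈ X, x ∉ line[ℝ, v, w]) ∧ Set.InjOn (fun x => line[ℝ, v, x]) X ∧
      Set.InjOn (fun x => line[ℝ, w, x]) X ∧ #P ≤ #X * (ℓ - 1) + ℓ := by
  classical
  let Q := P.filter (· ∉ line[ℝ, v, w])
  have hPQ : #P ≤ #Q + ℓ := by
    have hline := hcol.card_le_of_subset_affineSpan_pair
      (filter_subset (· ∈ line[ℝ, v, w]) P) fun x hx => (mem_filter.1 hx).2
    have hsplit : #(P.filter (· ∈ line[ℝ, v, w])) + #Q = #P :=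
      card_filter_add_card_filter_not _
    omega
  have hfib : ∀ z ∈ ({v, w} : Set (ℝ × ℝ)), ∀ L, #(Q.filter (line[ℝ, z, ·] = L)) ≤ ℓ - 1 := by
    rintro z hz L
    have hzP : z ∈ P := by rcases hz with rfl | rfl <;> assumption
    refine hcol.card_filter_affineSpan_pair_eq_le hzP (filter_subset _ _) (fun hzQ => ?_) L
    refine (mem_filter.1 hzQ).2 ?_
    rcases hz with rfl | rfl
    exacts [left_mem_affineSpan_pair .., right_mem_affineSpan_pair ..]
  obtain ⟨X, hXQ, hXv, hXw, hcard⟩ := exists_subset_injOn_injOn_card_le_mul Q _ _ (ℓ - 1)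
    (hfib v (.inl rfl)) (hfib w (.inr rfl)) fun x hx y _ hxy => by
      simp only [Prod.mk.injEq] at hxy
      exact (eq_of_mem_affineSpan_pair_of_mem_affineSpan_pair hvw (mem_filter.1 hx).2
        (hxy.1 ▸ right_mem_affineSpan_pair ..) (hxy.2 ▸ right_mem_affineSpan_pair ..)).symm
  exact ⟨X, hXQ.trans (filter_subset _ _), fun x hx => (mem_filter.1 (hXQ hx)).2, hXv, hXw,
    by omega⟩

end Counting

theorem isKEdgeConnected_of_pairwise_edges_disjoint {V : Type*} {G : SimpleGraph V} {k : ℕ}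
    (hV : 1 < Nat.card V)
    (h : ∀ u v, u ≠ v → ∃ f : Fin k → G.Walk u v,
      Pairwise fun i j => List.Disjoint (f i).edges (f j).edges) :
    IsKEdgeConnected G k := by
  have : Finite V := Nat.finite_of_card_ne_zero (by omega)
  have : Nonempty V := (Nat.card_pos_iff.1 (by omega)).1
  refine ⟨hV, fun F _ hFk => (connected_iff _).2 ⟨fun u v => ?_, inferInstance⟩⟩
  obtain rfl | huv := eq_or_ne u v
  · rfl
  obtain ⟨f, hf⟩ := h u v huv
  -- fewer than `k` edges cannot meet all `k` edge-disjoint walks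
  obtain ⟨i, hi⟩ : ∃ i, ∀ e ∈ (f i).edges, e ∉ F := by
    by_contra! hF
    choose e he using hF
    have hinj : Injective fun i => (⟨e i, (he i).2⟩ : F) := fun i j hij => by
      by_contra hne
      have hij : e i = e j := congrArg Subtype.val hij
      exact hf hne (he i).1 (hij ▸ (he j).1)
    simpa using (Nat.card_le_card_of_injective _ hinj).trans_lt hFk
  exact ⟨(f i).toDeleteEdges F hi⟩

theorem Nat.ceil_sub_one_div_sub_one_le {n m ℓ : ℕ} (hℓ : 2 ≤ ℓ) (h : n ≤ m * (ℓ - 1) + ℓ) :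
    ⌈((n : ℝ) - 1) / ((ℓ : ℝ) - 1)⌉₊ ≤ m + 1 := by
  have hℓ' : (2 : ℝ) ≤ ℓ := by exact_mod_cast hℓ
  have h' : (n : ℝ) ≤ m * ((ℓ : ℝ) - 1) + ℓ := by
    have := (Nat.cast_le (α := ℝ)).2 h
    push_cast [Nat.cast_sub (by omega : 1 ≤ ℓ)] at this
    exact this
  rw [Nat.ceil_le, div_le_iff₀ (by linarith)]
  push_cast
  linarith

theorem Finset.one_lt_card_of_not_collinear {P : Finset (ℝ × ℝ)}
    (hP : ¬ Collinear ℝ (P : Set (ℝ × ℝ))) : 1 < #P := by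
  by_contra! h
  obtain ⟨a, ha⟩ := card_le_one_iff_subset_singleton.1 h
  exact hP ((collinear_singleton ℝ a).subset (by simpa using coe_subset.2 ha))

theorem AtMostCollinear.exists_oneBend_paths {P : Finset (ℝ × ℝ)} {ℓ : ℕ}
    (hcol : AtMostCollinear P ℓ) {v w : {p : ℝ × ℝ // p ∈ P}} (hvw : v ≠ w) :
    ∃ f : Fin ⌈((#P : ℝ) - 1) / ((ℓ : ℝ) - 1)⌉₊ → (visibilityGraph P).Walk v w,
      (∀ i, (f i).IsPath ∧ OneBend P (f i)) ∧
      Pairwise fun i j => List.Disjoint (f i).edges (f j).edges := by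
  have hvw' : (v : ℝ × ℝ) ≠ w := Subtype.val_injective.ne hvw
  obtain ⟨X, hXP, hX, hXv, hXw, hcard⟩ := hcol.exists_bend_points v.2 w.2 hvw'
  obtain ⟨f, hf, hdisj⟩ := exists_oneBend_paths_of_injOn_affineSpan_pair hvw' hXP hX hXv hXw
  obtain ⟨e⟩ := Embedding.nonempty_of_card_le (α := Fin ⌈((#P : ℝ) - 1) / ((ℓ : ℝ) - 1)⌉₊)
    (β := Option X) <| by
      rw [Fintype.card_fin, Fintype.card_option, Fintype.card_coe]
      exact Nat.ceil_sub_one_div_sub_one_le (hcol.two_le v.2 w.2 hvw') hcard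
  exact ⟨f ∘ e, fun i => hf (e i), fun i j hij => hdisj (e.injective.ne hij)⟩

theorem visibility_edgeConnected_one_bend_general
    (P : Finset (ℝ × ℝ)) (ℓ : ℕ)
    (hcol : AtMostCollinear P ℓ) (hP : ¬ Collinear ℝ (P : Set (ℝ × ℝ)))
    (k : ℕ) (hk : k = ⌈((P.card : ℝ) - 1) / ((ℓ : ℝ) - 1)⌉₊) :
    IsKEdgeConnected (visibilityGraph P) k ∧
    ∀ v w : {p : ℝ × ℝ // p ∈ P}, v ≠ w →
      ∃ f : Fin k → (visibilityGraph P).Walk v w,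
        (∀ i, (f i).IsPath ∧ OneBend P (f i)) ∧
        ∀ i j, i ≠ j → List.Disjoint (f i).edges (f j).edges := by
  subst hk
  have hV : 1 < Nat.card {p : ℝ × ℝ // p ∈ P} := by
    simpa using P.one_lt_card_of_not_collinear hP
  refine ⟨isKEdgeConnected_of_pairwise_edges_disjoint hV fun v w hvw => ?_,
    fun v w hvw => hcol.exists_oneBend_paths hvw⟩
  obtain ⟨f, -, hf⟩ := hcol.exists_oneBend_paths hvw
  exact ⟨f, hf⟩

/-- Let `G` be the visibility graph of a set of `n` points, at most `ℓ` of which are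
collinear (`ℓ ≥ 2`, points not all collinear). Then `G` is `⌈(n-1)/(ℓ-1)⌉`-edge-connected,
and between each pair of distinct vertices there are `⌈(n-1)/(ℓ-1)⌉` pairwise
edge-disjoint paths, each with at most one bend. -/
theorem visibility_edgeConnected_one_bend
    (P : Finset (ℝ × ℝ)) (ℓ : ℕ) (hℓ : 2 ≤ ℓ)
    (hcol : AtMostCollinear P ℓ) (hP : ¬ Collinear ℝ (P : Set (ℝ × ℝ)))
    (k : ℕ) (hk : k = ⌈((P.card : ℝ) - 1) / ((ℓ : ℝ) - 1)⌉₊) :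
    IsKEdgeConnected (visibilityGraph P) k ∧
    ∀ v w : {p : ℝ × ℝ // p ∈ P}, v ≠ w →
      ∃ f : Fin k → (visibilityGraph P).Walk v w,
        (∀ i, (f i).IsPath ∧ OneBend P (f i)) ∧
        ∀ i j, i ≠ j → List.Disjoint (f i).edges (f j).edges :=
  visibility_edgeConnected_one_bend_general P ℓ hcol hP k hk
end

section
/- For a visibility graph G with at least 2 vertices, the following conditions are equivalent: (1) the vertices of G are not all collinear; (2) G has vertex-connectivity at least 2; (3) G has edge-connectivity at least 2; (4) G has minimum degree at least 2. -/
/-- The minimum degree of a graph: the least number of neighbours of a vertex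
(degree measured by `Nat.card` of the neighbour set). -/
noncomputable def minDegree' {V : Type*} (G : SimpleGraph V) : ℕ :=
  sInf {d | ∃ v : V, d = Nat.card (G.neighborSet v)}

/-- The vertex-connectivity of a graph: the least number of vertices whose deletion
disconnects the graph or reduces it to at most one vertex. -/
noncomputable def vertConn {V : Type*} (G : SimpleGraph V) : ℕ :=
  sInf {k | ∃ S : Set V, Nat.card S = k ∧
    (¬ (G.induce Sᶜ).Connected ∨ Nat.card (Sᶜ : Set V) ≤ 1)}

/-- The edge-connectivity of a graph: the least size of a set of edges whose removal
disconnects the graph. -/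
noncomputable def edgeConn {V : Type*} (G : SimpleGraph V) : ℕ :=
  sInf {k | ∃ F : Set (Sym2 V), F ⊆ G.edgeSet ∧ Nat.card F = k ∧
    ¬ (G.deleteEdges F).Connected}

/-! If `P` is not collinear and `x ≠ y` are in `P`, take a linear functional `φ` vanishing on the
direction of the line `xy`; the point `q` of `P` off that line minimising `|φ (q - x)|` sees every
point of the line, in particular `x` and `y`. By induction on the number of points strictly
between two vertices, a connection `xy` lost by deleting a single vertex or edge is either split
at a surviving point between `x` and `y` or rerouted through `q`, so the graph stays connected.
If `P` is collinear, an extreme point of its convex hull sees at most one point of `P`, since of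
three collinear points one lies between the other two. In a graph with at least two vertices,
vertex- and edge-connectivity never exceed the minimum degree, which closes the cycle. -/

namespace SimpleGraph

variable {V : Type*} {G : SimpleGraph V}

theorem not_preconnected_of_forall_not_adj {u v : V} (huv : u ≠ v) (hu : ∀ w, ¬G.Adj u w) :
    ¬G.Preconnected := fun h =>
  let ⟨p⟩ := h u v
  hu _ (p.adj_snd (Walk.not_nil_of_ne huv))

theorem not_connected_deleteEdges_incidenceSet [Nontrivial V] (v : V) :
    ¬(G.deleteEdges (G.incidenceSet v)).Connected := by
  obtain ⟨w, hw⟩ := exists_ne v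
  refine fun h => not_preconnected_of_forall_not_adj hw.symm (fun u huv => ?_) h.preconnected
  obtain ⟨hadj, hnot⟩ := deleteEdges_adj.1 huv
  exact hnot ⟨hadj, Sym2.mem_mk_left v u⟩

theorem exists_card_neighborSet_eq_minDegree' [Nonempty V] :
    ∃ v, Nat.card (G.neighborSet v) = minDegree' G := by
  obtain ⟨v, hv⟩ : minDegree' G ∈ {d | ∃ v : V, d = Nat.card (G.neighborSet v)} :=
    Nat.sInf_mem ⟨_, Classical.arbitrary V, rfl⟩
  exact ⟨v, hv.symm⟩

theorem minDegree'_le_card_neighborSet (v : V) : minDegree' G ≤ Nat.card (G.neighborSet v) :=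
  Nat.sInf_le ⟨v, rfl⟩

theorem vertConn_le_card_neighborSet (v : V) : vertConn G ≤ Nat.card (G.neighborSet v) := by
  refine Nat.sInf_le ⟨G.neighborSet v, rfl, ?_⟩
  have hv : v ∈ (G.neighborSet v)ᶜ := G.loopless.irrefl v
  by_cases hw : ∃ w : ↥(G.neighborSet v)ᶜ, w ≠ ⟨v, hv⟩
  · obtain ⟨w, hw⟩ := hw
    exact Or.inl fun h =>
      not_preconnected_of_forall_not_adj hw.symm (fun u huv => u.2 huv) h.preconnected
  · push Not at hw
    have : Subsingleton ↥(G.neighborSet v)ᶜ := ⟨fun a b => (hw a).trans (hw b).symm⟩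
    exact Or.inr (Finite.card_le_one_iff_subsingleton.2 this)

theorem edgeConn_le_card_neighborSet [Nontrivial V] (v : V) :
    edgeConn G ≤ Nat.card (G.neighborSet v) := by
  classical
  exact Nat.sInf_le ⟨G.incidenceSet v, G.incidenceSet_subset v,
    Nat.card_congr (G.incidenceSetEquivNeighborSet v), not_connected_deleteEdges_incidenceSet v⟩

theorem vertConn_le_minDegree' [Nonempty V] : vertConn G ≤ minDegree' G :=
  let ⟨v, hv⟩ := G.exists_card_neighborSet_eq_minDegree'
  hv ▸ G.vertConn_le_card_neighborSet v

theorem edgeConn_le_minDegree' [Nontrivial V] : edgeConn G ≤ minDegree' G :=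
  let ⟨v, hv⟩ := G.exists_card_neighborSet_eq_minDegree'
  hv ▸ G.edgeConn_le_card_neighborSet v

theorem two_le_vertConn [Finite V] (hV : 2 < Nat.card V)
    (h : ∀ S : Set V, S.Subsingleton → (G.induce Sᶜ).Preconnected) : 2 ≤ vertConn G := by
  refine le_csInf ⟨_, Set.univ, rfl, Or.inr (by simp)⟩ ?_
  rintro _ ⟨S, rfl, hS⟩
  by_contra! hlt
  have hS1 : S.Subsingleton := by
    rw [← Set.ncard_le_one_iff_subsingleton, ← Nat.card_coe_set_eq]; omega
  have hcompl : 1 < Nat.card ↥Sᶜ := by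
    have := Set.ncard_add_ncard_compl S
    rw [Nat.card_coe_set_eq] at hlt ⊢; omega
  have : Nonempty ↥Sᶜ := (Finite.one_lt_card_iff_nontrivial.1 hcompl).to_nonempty
  rcases hS with hS | hS
  · exact hS ⟨h S hS1⟩
  · omega

theorem two_le_edgeConn [Finite V] [Nontrivial V]
    (h : ∀ F : Set (Sym2 V), F.Subsingleton → (G.deleteEdges F).Preconnected) :
    2 ≤ edgeConn G := by
  obtain ⟨v⟩ := ‹Nontrivial V›.to_nonempty
  refine le_csInf ⟨_, G.incidenceSet v, G.incidenceSet_subset v, rfl,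
    not_connected_deleteEdges_incidenceSet v⟩ ?_
  rintro _ ⟨F, -, rfl, hF⟩
  by_contra! hlt
  have hF1 : F.Subsingleton := by
    rw [← Set.ncard_le_one_iff_subsingleton, ← Nat.card_coe_set_eq]; omega
  exact hF ⟨h F hF1⟩

end SimpleGraph

section Betweenness

variable {R V Q W : Type*} [Field R] [LinearOrder R] [IsStrictOrderedRing R]
  [AddCommGroup V] [Module R V] [AddTorsor V Q]

theorem SimpleGraph.preconnected_of_reachable_or_sbtw [Finite W] (G : SimpleGraph W) (f : W → Q)
    (h : ∀ x y, x ≠ y → G.Reachable x y ∨ ∃ u, Sbtw R (f x) (f u) (f y)) : G.Preconnected := by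
  intro x y
  induction hn : {u | Sbtw R (f x) (f u) (f y)}.ncard using Nat.strong_induction_on
    generalizing x y with
  | _ n ih =>
  rcases eq_or_ne x y with rfl | hxy
  · rfl
  obtain hreach | ⟨u, hu⟩ := h x y hxy
  · exact hreach
  have hxu : {w | Sbtw R (f x) (f w) (f u)}.ncard < n := hn ▸ Set.ncard_lt_ncard
    ⟨fun w hw => hu.trans_left hw, fun hsub => (hsub hu).ne_right rfl⟩
  have huy : {w | Sbtw R (f u) (f w) (f y)}.ncard < n := hn ▸ Set.ncard_lt_ncard
    ⟨fun w hw => hu.trans_right hw, fun hsub => (hsub hu).ne_left rfl⟩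
  exact (ih _ hxu x u rfl).trans (ih _ huy u y rfl)

end Betweenness

section Convex

variable {𝕜 E : Type*} [Field 𝕜] [LinearOrder 𝕜] [IsStrictOrderedRing 𝕜]
  [AddCommGroup E] [Module 𝕜 E]

theorem mem_openSegment_iff_sbtw {x y p : E} (hxy : x ≠ y) :
    p ∈ openSegment 𝕜 x y ↔ Sbtw 𝕜 x p y := by
  refine ⟨fun h => ⟨mem_segment_iff_wbtw.1 (openSegment_subset_segment 𝕜 x y h),
    fun hpx => hxy (left_mem_openSegment_iff.1 (hpx ▸ h)),
    fun hpy => hxy (right_mem_openSegment_iff.1 (hpy ▸ h))⟩, fun ⟨h, hpx, hpy⟩ => ?_⟩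
  rw [← mem_segment_iff_wbtw, ← insert_endpoints_openSegment] at h
  simpa [hpx, hpy] using h

theorem Finset.exists_apply_ne_forall_notMem_openSegment {P : Finset E} (φ : E →ₗ[𝕜] 𝕜) {c : 𝕜}
    {p : E} (hp : p ∈ P) (hpc : φ p ≠ c) :
    ∃ q ∈ P, φ q ≠ c ∧ ∀ z, φ z = c → ∀ r ∈ P, r ∉ openSegment 𝕜 z q := by
  obtain ⟨q, hq, hmin⟩ := (P.filter (φ · ≠ c)).exists_min_image (fun r => |φ r - c|)
    ⟨p, Finset.mem_filter.2 ⟨hp, hpc⟩⟩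
  rw [Finset.mem_filter] at hq
  refine ⟨q, hq.1, hq.2, ?_⟩
  rintro z hz r hr ⟨a, b, ha, hb, hab, rfl⟩
  have hφ : φ (a • z + b • q) - c = b * (φ q - c) := by
    simp only [map_add, map_smul, smul_eq_mul, hz]
    linear_combination c * hab
  have hq' : 0 < |φ q - c| := abs_pos.2 (sub_ne_zero.2 hq.2)
  have hr' : φ (a • z + b • q) ≠ c := by
    rw [← sub_ne_zero, hφ]
    exact mul_ne_zero hb.ne' (sub_ne_zero.2 hq.2)
  have := hmin _ (Finset.mem_filter.2 ⟨hr, hr'⟩)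
  rw [hφ, abs_mul, abs_of_pos hb] at this
  nlinarith

theorem Finset.exists_notMem_forall_notMem_openSegment {P : Finset E} {L : AffineSubspace 𝕜 E}
    {p : E} (hp : p ∈ P) (hpL : p ∉ L) :
    ∃ q ∈ P, q ∉ L ∧ ∀ z ∈ L, ∀ r ∈ P, r ∉ openSegment 𝕜 z q := by
  rcases (L : Set E).eq_empty_or_nonempty with hL | ⟨z₀, hz₀⟩
  · exact ⟨p, hp, hpL, fun z hz => (hL.subset hz).elim⟩
  obtain ⟨φ, hφp, hφL⟩ := Submodule.exists_le_ker_of_notMem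
    (mt (AffineSubspace.vsub_right_mem_direction_iff_mem hz₀ p).1 hpL)
  have hlevel : ∀ z ∈ L, φ z = φ z₀ := fun z hz =>
    sub_eq_zero.1 (by simpa using hφL (AffineSubspace.vsub_mem_direction hz hz₀))
  obtain ⟨q, hq, hqc, hvis⟩ := P.exists_apply_ne_forall_notMem_openSegment φ hp
    (c := φ z₀) (fun h => hφp (by simp [h]))
  exact ⟨q, hq, fun hqL => hqc (hlevel q hqL), fun z hz => hvis z (hlevel z hz)⟩

end Convex

theorem exists_mem_notMem_affineSpan_pair_of_not_collinear {k V Q : Type*} [DivisionRing k]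
    [AddCommGroup V] [Module k V] [AddTorsor V Q] {s : Set Q} (h : ¬Collinear k s) (x y : Q) :
    ∃ p ∈ s, p ∉ line[k, x, y] := by
  by_contra! hs
  apply h
  have hpair := collinear_pair k x y
  rw [collinear_iff_rank_le_one] at hpair ⊢
  calc Module.rank k (vectorSpan k s) ≤ Module.rank k (line[k, x, y].direction) :=
        Submodule.rank_mono (vectorSpan_mono k hs)
    _ ≤ 1 := by rwa [direction_affineSpan]

theorem Finset.two_lt_card_of_not_collinear {k V Q : Type*} [DivisionRing k] [AddCommGroup V]
    [Module k V] [AddTorsor V Q] {s : Finset Q} (h : ¬Collinear k (s : Set Q)) : 2 < s.card := by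
  obtain ⟨x, hx⟩ : s.Nonempty :=
    Finset.nonempty_iff_ne_empty.2 fun hs => h (by simpa [hs] using collinear_empty k Q)
  obtain ⟨y, hy, hyx⟩ := exists_mem_notMem_affineSpan_pair_of_not_collinear h x x
  obtain ⟨z, hz, hzxy⟩ := exists_mem_notMem_affineSpan_pair_of_not_collinear h x y
  refine Finset.two_lt_card.2 ⟨x, hx, y, hy, z, hz, ?_, ?_, ?_⟩
  · exact ne_of_mem_of_not_mem (left_mem_affineSpan_pair k x x) hyx
  · exact ne_of_mem_of_not_mem (left_mem_affineSpan_pair k x y) hzxy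
  · exact ne_of_mem_of_not_mem (right_mem_affineSpan_pair k x y) hzxy

section Visibility

variable {P : Finset (ℝ × ℝ)}

theorem exists_sbtw_of_not_visAdj {x y : ℝ × ℝ} (hxy : x ≠ y) (h : ¬VisAdj P x y) :
    ∃ p ∈ P, Sbtw ℝ x p y := by
  simp only [VisAdj, hxy, ne_eq, not_false_eq_true, true_and, not_forall, not_not] at h
  obtain ⟨p, hp, hseg⟩ := h
  exact ⟨p, hp, (mem_openSegment_iff_sbtw hxy).1 hseg⟩

theorem exists_visAdj_visAdj_of_not_collinear (h : ¬Collinear ℝ (P : Set (ℝ × ℝ)))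
    (x y : ℝ × ℝ) : ∃ q ∈ P, q ∉ line[ℝ, x, y] ∧ VisAdj P x q ∧ VisAdj P y q := by
  obtain ⟨p, hp, hpL⟩ := exists_mem_notMem_affineSpan_pair_of_not_collinear h x y
  obtain ⟨q, hq, hqL, hvis⟩ := P.exists_notMem_forall_notMem_openSegment hp hpL
  have hx := left_mem_affineSpan_pair ℝ x y
  have hy := right_mem_affineSpan_pair ℝ x y
  exact ⟨q, hq, hqL, ⟨ne_of_mem_of_not_mem hx hqL, hvis x hx⟩,
    ⟨ne_of_mem_of_not_mem hy hqL, hvis y hy⟩⟩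

open SimpleGraph

theorem visibilityGraph_induce_compl_preconnected (h : ¬Collinear ℝ (P : Set (ℝ × ℝ)))
    {S : Set {p // p ∈ P}} (hS : S.Subsingleton) :
    ((visibilityGraph P).induce Sᶜ).Preconnected := by
  refine preconnected_of_reachable_or_sbtw (R := ℝ) _ (fun v : ↥Sᶜ => v.1.1) ?_
  rintro ⟨⟨x, hx⟩, hxS⟩ ⟨⟨y, hy⟩, hyS⟩ hne
  have hxy : x ≠ y := by rintro rfl; exact hne rfl
  obtain ⟨q, hq, hqL, hxq, hyq⟩ := exists_visAdj_visAdj_of_not_collinear h x y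
  by_cases hqS : ⟨q, hq⟩ ∈ S
  · by_cases hvis : VisAdj P x y
    · exact Or.inl (Adj.reachable hvis)
    obtain ⟨p, hp, hxpy⟩ := exists_sbtw_of_not_visAdj hxy hvis
    -- `S = {q}` and `q` is off the line `x y`, so `p` survives the deletion
    have hpS : ⟨p, hp⟩ ∉ S := fun hpS => by
      obtain rfl : p = q := congrArg Subtype.val (hS hpS hqS)
      exact hqL hxpy.wbtw.mem_affineSpan
    exact Or.inr ⟨⟨⟨p, hp⟩, hpS⟩, hxpy⟩
  · have hxq' : ((visibilityGraph P).induce Sᶜ).Adj ⟨⟨x, hx⟩, hxS⟩ ⟨⟨q, hq⟩, hqS⟩ := hxq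
    have hyq' : ((visibilityGraph P).induce Sᶜ).Adj ⟨⟨y, hy⟩, hyS⟩ ⟨⟨q, hq⟩, hqS⟩ := hyq
    exact Or.inl (hxq'.reachable.trans hyq'.reachable.symm)

theorem visibilityGraph_deleteEdges_preconnected (h : ¬Collinear ℝ (P : Set (ℝ × ℝ)))
    {F : Set (Sym2 {p // p ∈ P})} (hF : F.Subsingleton) :
    ((visibilityGraph P).deleteEdges F).Preconnected := by
  refine preconnected_of_reachable_or_sbtw (R := ℝ) _ Subtype.val ?_
  rintro ⟨x, hx⟩ ⟨y, hy⟩ hne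
  have hxy : x ≠ y := by rintro rfl; exact hne rfl
  by_cases hxyF : s(⟨x, hx⟩, ⟨y, hy⟩) ∈ F
  · obtain ⟨q, hq, hqL, hxq, hyq⟩ := exists_visAdj_visAdj_of_not_collinear h x y
    have hqy : q ≠ y := ne_of_mem_of_not_mem (right_mem_affineSpan_pair ℝ x y) hqL |>.symm
    have hqx : q ≠ x := ne_of_mem_of_not_mem (left_mem_affineSpan_pair ℝ x y) hqL |>.symm
    have h₁ : ((visibilityGraph P).deleteEdges F).Adj ⟨x, hx⟩ ⟨q, hq⟩ :=
      deleteEdges_adj.2 ⟨hxq, fun hmem =>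
        hqy (congrArg Subtype.val (Sym2.congr_right.1 (hF hmem hxyF)))⟩
    have h₂ : ((visibilityGraph P).deleteEdges F).Adj ⟨y, hy⟩ ⟨q, hq⟩ :=
      deleteEdges_adj.2 ⟨hyq, fun hmem =>
        hqx (congrArg Subtype.val (Sym2.congr_right.1 ((hF hmem hxyF).trans Sym2.eq_swap)))⟩
    exact Or.inl (h₁.reachable.trans h₂.reachable.symm)
  by_cases hvis : VisAdj P x y
  · exact Or.inl (deleteEdges_adj.2 ⟨hvis, hxyF⟩).reachable
  obtain ⟨p, hp, hxpy⟩ := exists_sbtw_of_not_visAdj hxy hvis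
  exact Or.inr ⟨⟨p, hp⟩, hxpy⟩

theorem visibilityGraph_minDegree'_le_one (hne : P.Nonempty)
    (h : Collinear ℝ (P : Set (ℝ × ℝ))) : minDegree' (visibilityGraph P) ≤ 1 := by
  obtain ⟨e, he⟩ := (P.finite_toSet.isCompact_convexHull (𝕜 := ℝ)).extremePoints_nonempty
    (convexHull_nonempty_iff.2 hne)
  have heP : e ∈ P := extremePoints_convexHull_subset he
  refine (minDegree'_le_card_neighborSet ⟨e, heP⟩).trans
    (Finite.card_le_one_iff_subsingleton.2 ⟨fun ⟨u, hu⟩ ⟨w, hw⟩ => ?_⟩)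
  by_contra huw
  have huw' : u.1 ≠ w.1 := fun h => huw (by congr; exact Subtype.ext h)
  have hcol : Collinear ℝ ({e, u.1, w.1} : Set (ℝ × ℝ)) :=
    h.subset (by simp [Set.insert_subset_iff, heP])
  rcases hcol.wbtw_or_wbtw_or_wbtw with h₁ | h₁ | h₁
  · exact hw.2 u.1 u.2 ((mem_openSegment_iff_sbtw hw.1).2 ⟨h₁, hu.1.symm, huw'⟩)
  · exact hu.2 w.1 w.2 (openSegment_symm ℝ u.1 e ▸
      (mem_openSegment_iff_sbtw hu.1.symm).2 ⟨h₁, huw'.symm, hw.1.symm⟩)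
  · have := (mem_extremePoints.1 he).2 w (subset_convexHull ℝ _ w.2) u
      (subset_convexHull ℝ _ u.2) ((mem_openSegment_iff_sbtw huw'.symm).2 ⟨h₁, hw.1, hu.1⟩)
    exact hw.1 this.1.symm

theorem visibilityGraph_two_le_vertConn (h : ¬Collinear ℝ (P : Set (ℝ × ℝ))) :
    2 ≤ vertConn (visibilityGraph P) :=
  (visibilityGraph P).two_le_vertConn
    (by rw [Nat.card_eq_finsetCard]; exact P.two_lt_card_of_not_collinear h)
    fun _ hS => visibilityGraph_induce_compl_preconnected h hS

theorem visibilityGraph_two_le_edgeConn (h : ¬Collinear ℝ (P : Set (ℝ × ℝ))) :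
    2 ≤ edgeConn (visibilityGraph P) :=
  have : Nontrivial {p // p ∈ P} := Finite.one_lt_card_iff_nontrivial.1
    (by rw [Nat.card_eq_finsetCard]; have := P.two_lt_card_of_not_collinear h; omega)
  (visibilityGraph P).two_le_edgeConn fun _ hF => visibilityGraph_deleteEdges_preconnected h hF

end Visibility

/-- For a visibility graph `G` with at least two vertices, the following are equivalent:
(1) the vertices are not all collinear; (2) vertex-connectivity at least 2;
(3) edge-connectivity at least 2; (4) minimum degree at least 2. -/
theorem visibility_two_connected_equivalences
    (P : Finset (ℝ × ℝ)) (hP : 2 ≤ P.card) :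
    (¬ Collinear ℝ (P : Set (ℝ × ℝ)) ↔ 2 ≤ vertConn (visibilityGraph P)) ∧
    (2 ≤ vertConn (visibilityGraph P) ↔ 2 ≤ edgeConn (visibilityGraph P)) ∧
    (2 ≤ edgeConn (visibilityGraph P) ↔ 2 ≤ minDegree' (visibilityGraph P)) := by
  have : Nontrivial {p // p ∈ P} := Finite.one_lt_card_iff_nontrivial.1
    (by rw [Nat.card_eq_finsetCard]; omega)
  have hδ : 2 ≤ minDegree' (visibilityGraph P) → ¬Collinear ℝ (P : Set (ℝ × ℝ)) :=
    fun h hcol => by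
      have := visibilityGraph_minDegree'_le_one (Finset.card_pos.1 (by omega)) hcol
      omega
  have hvert := (visibilityGraph P).vertConn_le_minDegree'
  have hedge := (visibilityGraph P).edgeConn_le_minDegree'
  exact ⟨⟨visibilityGraph_two_le_vertConn, fun h => hδ (h.trans hvert)⟩,
    ⟨fun h => visibilityGraph_two_le_edgeConn (hδ (h.trans hvert)),
      fun h => visibilityGraph_two_le_vertConn (hδ (h.trans hedge))⟩,
    ⟨fun h => h.trans hedge, fun h => visibilityGraph_two_le_edgeConn (hδ h)⟩⟩
end

section
/- For a visibility graph G, the following conditions are equivalent: (1) G has vertex-connectivity at least 3; (2) G has edge-connectivity at least 3; (3) G has minimum degree at least 3. -/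
/-!
In any graph, vertex- or edge-connectivity at least `k` forces minimum degree at least `k`, and
for finite graphs vertex-connectivity at least `k` forces edge-connectivity at least `k`: a
vertex of the side `A` of a small edge cut either has all its edges inside `A`, and then the
`A`-ends of the cut separate it, or every vertex of `A` is such an end, and then a vertex of
`A` has at most as many neighbours as there are cut edges.

The geometric content is that a visibility graph of minimum degree at least three has no
vertex cut `S` with `|S| ≤ 2` separating `A` from `B`. Among pairs `a ∈ A`, `b ∈ B` one with
fewest points on `[a, b]` has all its blockers in `S`; the same argument inside a convex region
free of `S` shows that the region cannot meet both `A` and `B`. So some `c₁ ∈ S` lies on the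
open segment `ab`. If `P` is collinear, an extreme point has at most one neighbour. Otherwise the point
`c₂` nearest to the line `ab` sees every point of the line, hence `S = {c₁, c₂}`, all other
points lie strictly beyond `c₂`, and the line splits at `c₁` into an `A`-ray and a `B`-ray.
The open half-plane beyond `c₂` meets only one of `A`, `B`; the other lies on the line, and its
extreme point there sees at most `c₂` and one point of the line.
-/

open Set

lemma Nat.le_sInf_iff_of_ne_zero {k : ℕ} {s : Set ℕ} (hk : k ≠ 0) :
    k ≤ sInf s ↔ s.Nonempty ∧ ∀ m ∈ s, k ≤ m := by
  refine ⟨fun h => ?_, fun ⟨hne, h⟩ => le_csInf hne h⟩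
  have hne : s.Nonempty := by
    by_contra hs
    rw [not_nonempty_iff_eq_empty.1 hs, Nat.sInf_empty] at h
    omega
  exact ⟨hne, (le_csInf_iff (OrderBot.bddBelow s) hne).1 h⟩

lemma Sym2.eq_of_mk_eq_mk_of_mem_of_notMem {V : Type*} {A : Set V} {v v' w w' : V} (hv : v ∈ A)
    (hw' : w' ∉ A) (h : s(v, w) = s(v', w')) : v = v' := by
  rcases Sym2.eq_iff.1 h with ⟨h, -⟩ | ⟨rfl, -⟩
  · exact h
  · exact absurd hv hw'

namespace SimpleGraph

variable {V : Type*} (G : SimpleGraph V) {k : ℕ}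

lemma le_minDegree'_iff (hk : k ≠ 0) :
    k ≤ minDegree' G ↔ Nonempty V ∧ ∀ v, k ≤ Nat.card (G.neighborSet v) := by
  simp only [minDegree', Nat.le_sInf_iff_of_ne_zero hk, Set.Nonempty, mem_ofPred_eq,
    forall_exists_index, forall_eq_apply_imp_iff]
  exact and_congr_left' ⟨fun ⟨_, v, _⟩ => ⟨v⟩, fun ⟨v⟩ => ⟨_, v, rfl⟩⟩

lemma le_vertConn_iff (hk : k ≠ 0) :
    k ≤ vertConn G ↔
      ∀ S : Set V, Nat.card S < k → (G.induce Sᶜ).Connected ∧ 1 < Nat.card ↥Sᶜ := by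
  rw [vertConn, Nat.le_sInf_iff_of_ne_zero hk]
  refine ⟨fun ⟨_, h⟩ S hS => ?_, fun h => ⟨⟨_, univ, rfl, Or.inr (by simp)⟩, ?_⟩⟩
  · by_contra hc
    rw [not_and_or, not_lt] at hc
    exact hS.not_ge (h _ ⟨S, rfl, hc⟩)
  · rintro m ⟨S, rfl, hS⟩
    by_contra! hm
    have := h S hm
    exact hS.elim (· this.1) (by omega)

lemma le_edgeConn_iff (hk : k ≠ 0) :
    k ≤ edgeConn G ↔ (∃ F ⊆ G.edgeSet, ¬ (G.deleteEdges F).Connected) ∧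
      ∀ F ⊆ G.edgeSet, Nat.card F < k → (G.deleteEdges F).Connected := by
  rw [edgeConn, Nat.le_sInf_iff_of_ne_zero hk]
  refine and_congr ⟨fun ⟨_, F, hF, _, h⟩ => ⟨F, hF, h⟩, fun ⟨F, hF, h⟩ => ⟨_, F, hF, rfl, h⟩⟩
    ⟨fun h F hF hFk => ?_, fun h m ⟨F, hF, hm, hdis⟩ => ?_⟩
  · by_contra hc
    exact hFk.not_ge (h _ ⟨F, hF, rfl, hc⟩)
  · by_contra! hmk
    exact hdis (h F hF (hm ▸ hmk))

lemma not_connected_of_forall_not_adj {v w : V} (hvw : v ≠ w) (h : ∀ u, ¬ G.Adj v u) :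
    ¬ G.Connected := fun hc => by
  obtain ⟨p⟩ := hc v w
  cases p with
  | nil => exact hvw rfl
  | cons hadj _ => exact h _ hadj

lemma le_minDegree'_of_le_edgeConn (hk : k ≠ 0) (h : k ≤ edgeConn G) : k ≤ minDegree' G := by
  obtain ⟨⟨F, -, hdis⟩, hsmall⟩ := (G.le_edgeConn_iff hk).1 h
  have hconn : G.Connected := by
    simpa using hsmall ∅ (empty_subset _) (by simpa [Nat.pos_iff_ne_zero])
  refine (G.le_minDegree'_iff hk).2 ⟨hconn.nonempty, fun v => ?_⟩
  by_contra! hv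
  obtain ⟨w, hwv⟩ : ∃ w, w ≠ v := by
    by_contra! hall
    exact hdis ((connected_iff _).2 ⟨fun x y => by rw [hall x, hall y], hconn.nonempty⟩)
  refine (G.deleteEdges _).not_connected_of_forall_not_adj hwv.symm (fun u hu => ?_)
    (hsmall (G.incidenceSet v) (G.incidenceSet_subset v) ?_)
  · exact (deleteEdges_adj.1 hu).2 ((G.mem_incidenceSet v u).2 (deleteEdges_adj.1 hu).1)
  · classical
    rwa [Nat.card_congr (G.incidenceSetEquivNeighborSet v)]

lemma le_minDegree'_of_le_vertConn (hk : k ≠ 0) (h : k ≤ vertConn G) : k ≤ minDegree' G := by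
  rw [le_vertConn_iff G hk] at h
  have hV := (h ∅ (by simpa [Nat.pos_iff_ne_zero])).2
  rw [compl_empty, Nat.card_univ] at hV
  refine (G.le_minDegree'_iff hk).2 ⟨(Nat.card_pos_iff.1 (by omega)).1, fun v => ?_⟩
  by_contra! hv
  obtain ⟨hconn, hcard⟩ := h (G.neighborSet v) hv
  obtain ⟨w, hw, hwv⟩ := exists_ne_of_one_lt_ncard (by rwa [← Nat.card_coe_set_eq]) v
  exact (G.induce _).not_connected_of_forall_not_adj (v := ⟨v, G.notMem_neighborSet_self⟩)
    (w := ⟨w, hw⟩) (fun h => hwv (congrArg Subtype.val h).symm) (fun u hu => u.2 hu) hconn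

lemma le_vertConn_of_le_minDegree' [Finite V] (hk : k ≠ 0) (hδ : k ≤ minDegree' G)
    (hconn : ∀ S : Set V, Nat.card S < k → Sᶜ.Nonempty → (G.induce Sᶜ).Connected) :
    k ≤ vertConn G := by
  obtain ⟨⟨v⟩, hdeg⟩ := (G.le_minDegree'_iff hk).1 hδ
  have hV : k + 1 ≤ Nat.card V := by
    have := ncard_le_card (insert v (G.neighborSet v))
    rw [ncard_insert_of_notMem G.notMem_neighborSet_self, ← Nat.card_coe_set_eq] at this
    linarith [hdeg v]
  refine (G.le_vertConn_iff hk).2 fun S hS => ?_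
  have hsum : Nat.card S + Nat.card ↥Sᶜ = Nat.card V := by
    simp only [Nat.card_coe_set_eq]
    exact ncard_add_ncard_compl S
  have hSc : 1 < Nat.card ↥Sᶜ := by omega
  exact ⟨hconn S hS (nonempty_coe_sort.1 (Nat.card_pos_iff.1 (by omega)).1), hSc⟩

def innerBoundary (A : Set V) : Set V := {v ∈ A | ∃ w ∉ A, G.Adj v w}

lemma not_connected_induce_compl_innerBoundary {A : Set V} {u y : V}
    (hu : u ∈ A \ G.innerBoundary A) (hy : y ∉ A) :
    ¬ (G.induce (G.innerBoundary A)ᶜ).Connected := fun hc => by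
  obtain ⟨p⟩ := hc ⟨u, hu.2⟩ ⟨y, fun h => hy h.1⟩
  obtain ⟨d, -, hd1, hd2⟩ := p.exists_boundary_dart (Subtype.val ⁻¹' A) hu.1 hy
  exact d.fst.2 ⟨hd1, d.snd, hd2, d.adj⟩

variable {G} in
lemma card_innerBoundary_le [Finite V] {A : Set V} {F : Set (Sym2 V)}
    (hF : ∀ v w, G.Adj v w → v ∈ A → w ∉ A → s(v, w) ∈ F) :
    Nat.card (G.innerBoundary A) ≤ Nat.card F := by
  have hout : ∀ v : G.innerBoundary A, ∃ w, w ∉ A ∧ G.Adj v w := fun v => v.2.2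
  choose w hw using hout
  refine Nat.card_le_card_of_injective (fun v => ⟨s(v, w v), hF _ _ (hw v).2 v.2.1 (hw v).1⟩)
    fun v v' h => Subtype.ext ?_
  exact Sym2.eq_of_mk_eq_mk_of_mem_of_notMem v.2.1 (hw v').1 (congrArg Subtype.val h)

variable {G} in
lemma card_neighborSet_le_of_subset_innerBoundary [Finite V] {A : Set V} {F : Set (Sym2 V)}
    (hF : ∀ v w, G.Adj v w → v ∈ A → w ∉ A → s(v, w) ∈ F) (hA : A ⊆ G.innerBoundary A)
    {x : V} (hx : x ∈ A) : Nat.card (G.neighborSet x) ≤ Nat.card F := by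
  classical
  have hout : ∀ v ∈ A, ∃ w, w ∉ A ∧ G.Adj v w := fun v hv => (hA hv).2
  choose! out hout using hout
  let e : G.neighborSet x → F := fun w =>
    if hw : w.1 ∈ A then ⟨s(w, out w), hF _ _ (hout w hw).2 hw (hout w hw).1⟩
    else ⟨s(x, w), hF _ _ w.2 hx hw⟩
  refine Nat.card_le_card_of_injective e fun w w' h => Subtype.ext ?_
  have h' := congrArg Subtype.val h
  simp only [e] at h'
  split_ifs at h' with hw hw' hw'
  · exact Sym2.eq_of_mk_eq_mk_of_mem_of_notMem hw (hout w' hw').1 h'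
  · exact absurd (Sym2.eq_of_mk_eq_mk_of_mem_of_notMem hw hw' h') (G.ne_of_adj w.2).symm
  · exact absurd (Sym2.eq_of_mk_eq_mk_of_mem_of_notMem hw' hw h'.symm) (G.ne_of_adj w'.2).symm
  · exact Sym2.congr_right.1 h'

lemma connected_induce_of_forall_exists_adj {s : Set V} (hs : s.Nonempty)
    (h : ∀ A ⊆ s, A.Nonempty → (s \ A).Nonempty → ∃ a ∈ A, ∃ b ∈ s \ A, G.Adj a b) :
    (G.induce s).Connected := by
  obtain ⟨x, hx⟩ := hs
  refine (connected_iff_exists_forall_reachable _).2 ⟨⟨x, hx⟩, fun ⟨y, hy⟩ => ?_⟩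
  by_contra hxy
  obtain ⟨a, ⟨ha, hxa⟩, b, ⟨hb, hbA⟩, hab⟩ :=
    h {v | ∃ hv : v ∈ s, (G.induce s).Reachable ⟨x, hx⟩ ⟨v, hv⟩} (fun v hv => hv.1)
      ⟨x, hx, Reachable.refl _⟩ ⟨y, hy, fun ⟨_, h'⟩ => hxy h'⟩
  exact hbA ⟨hb, hxa.trans (show (G.induce s).Adj ⟨a, ha⟩ ⟨b, hb⟩ from hab).reachable⟩

theorem le_edgeConn_of_le_vertConn [Finite V] (hk : k ≠ 0) (h : k ≤ vertConn G) :
    k ≤ edgeConn G := by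
  have hdeg := ((G.le_minDegree'_iff hk).1 (G.le_minDegree'_of_le_vertConn hk h)).2
  rw [le_vertConn_iff G hk] at h
  have : Nontrivial V := by
    have htwo := (h ∅ (by simpa [Nat.pos_iff_ne_zero])).2
    rwa [compl_empty, Nat.card_univ, Finite.one_lt_card_iff_nontrivial] at htwo
  refine (G.le_edgeConn_iff hk).2 ⟨⟨G.edgeSet, subset_rfl, ?_⟩, fun F _ hFk => ?_⟩
  · rw [deleteEdges_edgeSet, _root_.sdiff_self]
    exact not_connected_bot
  by_contra hdis
  obtain ⟨x, y, hxy⟩ : ∃ x y, ¬ (G.deleteEdges F).Reachable x y := by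
    by_contra! hall
    exact hdis ((connected_iff _).2 ⟨hall, inferInstance⟩)
  set A := {v | (G.deleteEdges F).Reachable x v}
  have hcross : ∀ v w, G.Adj v w → v ∈ A → w ∉ A → s(v, w) ∈ F := fun v w hvw hv hw => by
    by_contra hF
    exact hw (hv.trans (deleteEdges_adj.2 ⟨hvw, hF⟩).reachable)
  by_cases hA : A ⊆ G.innerBoundary A
  · exact (hdeg x).not_gt
      ((card_neighborSet_le_of_subset_innerBoundary hcross hA (Reachable.refl x)).trans_lt hFk)
  · obtain ⟨u, hu⟩ := not_subset.1 hA
    exact G.not_connected_induce_compl_innerBoundary hu hxy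
      (h _ ((card_innerBoundary_le hcross).trans_lt hFk)).1

end SimpleGraph

local notation "ℝ²" => ℝ × ℝ

section Segments

variable {𝕜 E F : Type*} [Semiring 𝕜] [PartialOrder 𝕜] [AddCommMonoid E] [AddCommMonoid F]
  [Module 𝕜 E] [Module 𝕜 F]

lemma LinearMap.map_mem_openSegment (f : E →ₗ[𝕜] F) {x y z : E} (h : z ∈ openSegment 𝕜 x y) :
    f z ∈ openSegment 𝕜 (f x) (f y) := by
  obtain ⟨a, b, ha, hb, hab, rfl⟩ := h
  exact ⟨a, b, ha, hb, hab, by simp⟩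

end Segments

section RealSegments

variable {E : Type*} [AddCommMonoid E] [Module ℝ E] (f : E →ₗ[ℝ] ℝ) {x y z : E}

lemma LinearMap.mem_Ioo_of_mem_openSegment (hz : z ∈ openSegment ℝ x y) (h : f x < f y) :
    f z ∈ Ioo (f x) (f y) :=
  openSegment_subset_Ioo h (f.map_mem_openSegment hz)

lemma LinearMap.eq_of_mem_openSegment (hz : z ∈ openSegment ℝ x y) (h : f x = f y) :
    f z = f x := by
  simpa [h] using f.map_mem_openSegment hz

end RealSegments

lemma exists_line_coordinates {a b : ℝ²} (hab : a ≠ b) : ∃ f g : ℝ² →ₗ[ℝ] ℝ,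
    (∀ x y, f x = f y → g x = g y → x = y) ∧ f a = f b ∧ g a < g b := by
  obtain ⟨d, hd, rfl⟩ : ∃ d ≠ 0, b = a + d := ⟨b - a, sub_ne_zero.2 hab.symm, by abel⟩
  have hpos : 0 < d.1 * d.1 + d.2 * d.2 := by
    obtain h | h : d.1 ≠ 0 ∨ d.2 ≠ 0 := by
      by_contra! h
      exact hd (Prod.ext h.1 h.2)
    · nlinarith [mul_self_pos.2 h, mul_self_nonneg d.2]
    · nlinarith [mul_self_pos.2 h, mul_self_nonneg d.1]
  refine ⟨d.1 • LinearMap.snd ℝ ℝ ℝ - d.2 • LinearMap.fst ℝ ℝ ℝ,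
    d.1 • LinearMap.fst ℝ ℝ ℝ + d.2 • LinearMap.snd ℝ ℝ ℝ, fun x y h₁ h₂ => ?_, ?_, ?_⟩ <;>
    simp only [LinearMap.sub_apply, LinearMap.add_apply, LinearMap.smul_apply, LinearMap.fst_apply,
      LinearMap.snd_apply, smul_eq_mul, Prod.fst_add, Prod.snd_add] at *
  · refine Prod.ext (mul_left_cancel₀ hpos.ne' ?_) (mul_left_cancel₀ hpos.ne' ?_)
    · linear_combination d.1 * h₂ - d.2 * h₁
    · linear_combination d.2 * h₂ + d.1 * h₁
  · ring
  · linarith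

def visibleFrom (P : Finset ℝ²) (v : ℝ²) : Set ℝ² := {w ∈ (P : Set ℝ²) | VisAdj P v w}

lemma finite_visibleFrom (P : Finset ℝ²) (v : ℝ²) : (visibleFrom P v).Finite :=
  P.finite_toSet.subset (sep_subset _ _)

lemma VisAdj.symm {P : Finset ℝ²} {x y : ℝ²} (h : VisAdj P x y) : VisAdj P y x :=
  ⟨h.1.symm, fun p hp => openSegment_symm ℝ x y ▸ h.2 p hp⟩

lemma exists_mem_openSegment_of_not_visAdj {P : Finset ℝ²} {x y : ℝ²} (hxy : x ≠ y)
    (h : ¬ VisAdj P x y) : ∃ p ∈ P, p ∈ openSegment ℝ x y := by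
  simpa [VisAdj, hxy] using h

lemma visAdj_of_forall_notMem_Ioo {P : Finset ℝ²} (f : ℝ² →ₗ[ℝ] ℝ) {x y : ℝ²} (hxy : f x < f y)
    (h : ∀ p ∈ P, f p ∉ Ioo (f x) (f y)) : VisAdj P x y :=
  ⟨fun e => hxy.ne (congrArg f e), fun p hp hps => h p hp (f.mem_Ioo_of_mem_openSegment hps hxy)⟩

lemma ncard_inter_segment_lt {P : Finset ℝ²} {a b p : ℝ²} (hab : a ≠ b) (ha : a ∈ P)
    (hp : p ∈ openSegment ℝ a b) :
    (↑P ∩ segment ℝ p b).ncard < (↑P ∩ segment ℝ a b).ncard := by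
  have hp' := openSegment_subset_segment ℝ a b hp
  have hsub : segment ℝ p b ⊆ segment ℝ a b :=
    (convex_segment a b).segment_subset hp' (right_mem_segment ℝ a b)
  refine ncard_lt_ncard ((ssubset_iff_of_subset (inter_subset_inter_right _ hsub)).2
    ⟨a, ⟨ha, left_mem_segment ℝ a b⟩, fun ⟨_, ha'⟩ => ?_⟩) (P.finite_toSet.inter_of_left _)
  obtain rfl : a = p := (wbtw_swap_left_iff ℝ b).1
    ⟨mem_segment_iff_wbtw.1 hp', mem_segment_iff_wbtw.1 ha'⟩
  exact hab (left_mem_openSegment_iff.1 hp)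

section Collinear

variable {P : Finset ℝ²} {f g : ℝ² →ₗ[ℝ] ℝ}

lemma mem_openSegment_of_eq_of_lt (hfg : ∀ x y, f x = f y → g x = g y → x = y) {x y z : ℝ²}
    (hy : f y = f x) (hz : f z = f x) (hxz : g x < g z) (hzy : g z < g y) :
    z ∈ openSegment ℝ x y := by
  have hpos : 0 < g y - g x := by linarith
  set t := (g z - g x) / (g y - g x) with ht
  have ht₀ : 0 < t := div_pos (by linarith) hpos
  have ht₁ : t < 1 := (div_lt_one hpos).2 (by linarith)
  refine ⟨1 - t, t, by linarith, ht₀, by ring, hfg _ _ ?_ ?_⟩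
  · simp only [map_add, map_smul, smul_eq_mul, hy, hz]
    ring
  · simp only [map_add, map_smul, smul_eq_mul, ht]
    field_simp
    ring

lemma ncard_visibleFrom_sep_le_one (hfg : ∀ x y, f x = f y → g x = g y → x = y) {e : ℝ²}
    (hmin : ∀ w ∈ P, f w = f e → g e ≤ g w) :
    {w ∈ visibleFrom P e | f w = f e}.ncard ≤ 1 := by
  refine (ncard_le_one ((finite_visibleFrom P e).subset (sep_subset _ _))).2 fun u hu v hv => ?_
  by_contra huv
  have hlt : ∀ w ∈ {w ∈ visibleFrom P e | f w = f e}, g e < g w := fun w hw =>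
    (hmin w hw.1.1 hw.2).lt_of_ne fun h => hw.1.2.1 (hfg _ _ hw.2.symm h)
  wlog h : g u < g v generalizing u v
  · exact this v hv u hu (Ne.symm huv)
      ((not_lt.1 h).lt_of_ne fun h' => huv (hfg _ _ (hu.2.trans hv.2.symm) h'.symm))
  exact hv.1.2.2 u hu.1.1 (mem_openSegment_of_eq_of_lt hfg hv.2 hu.2 (hlt u hu) h)

lemma exists_ncard_visibleFrom_le_one_of_collinear (hfg : ∀ x y, f x = f y → g x = g y → x = y)
    (hP : P.Nonempty) {c : ℝ} (hc : ∀ p ∈ P, f p = c) :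
    ∃ v ∈ P, (visibleFrom P v).ncard ≤ 1 := by
  obtain ⟨e, he, hemin⟩ := exists_min_image (P : Set ℝ²) g P.finite_toSet hP
  refine ⟨e, he, ?_⟩
  have hsep : {w ∈ visibleFrom P e | f w = f e} = visibleFrom P e :=
    sep_eq_self_iff_mem_true.2 fun w hw => (hc w hw.1).trans (hc e he).symm
  exact hsep ▸ ncard_visibleFrom_sep_le_one hfg fun w hw _ => hemin w hw

end Collinear

structure MutuallyInvisible (P : Finset ℝ²) (A B : Set ℝ²) : Prop where
  subset_left : A ⊆ P
  subset_right : B ⊆ P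
  disjoint : Disjoint A B
  not_visAdj : ∀ x ∈ A, ∀ y ∈ B, ¬ VisAdj P x y

namespace MutuallyInvisible

variable {P : Finset ℝ²} {A B : Set ℝ²} {f g : ℝ² →ₗ[ℝ] ℝ}

lemma symm (h : MutuallyInvisible P A B) : MutuallyInvisible P B A :=
  ⟨h.subset_right, h.subset_left, h.disjoint.symm,
    fun y hy x hx hv => h.not_visAdj x hx y hy hv.symm⟩

/-- Take a pair minimising the number of points of `P` on `[a, b]`. -/
lemma exists_forall_mem_openSegment_notMem (h : MutuallyInvisible P A B) (hA : A.Nonempty)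
    (hB : B.Nonempty) : ∃ a ∈ A, ∃ b ∈ B, ∀ p ∈ P, p ∈ openSegment ℝ a b → p ∉ A ∪ B := by
  have hfin : (A ×ˢ B).Finite :=
    (P.finite_toSet.subset h.subset_left).prod (P.finite_toSet.subset h.subset_right)
  obtain ⟨⟨a, b⟩, ⟨ha, hb⟩, hmin⟩ := exists_min_image (A ×ˢ B)
    (fun q => (↑P ∩ segment ℝ q.1 q.2).ncard) hfin (hA.prod hB)
  have hab : a ≠ b := h.disjoint.ne_of_mem ha hb
  refine ⟨a, ha, b, hb, fun p _ hp hpAB => ?_⟩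
  rcases hpAB with hpA | hpB
  · exact (ncard_inter_segment_lt hab (h.subset_left ha) hp).not_ge (hmin (p, b) ⟨hpA, hb⟩)
  · have hlt := ncard_inter_segment_lt hab.symm (h.subset_right hb) (openSegment_symm ℝ a b ▸ hp)
    rw [segment_symm ℝ p a, segment_symm ℝ b a] at hlt
    exact hlt.not_ge (hmin (a, p) ⟨ha, hpB⟩)

lemma notMem_of_convex (h : MutuallyInvisible P A B) {R : Set ℝ²} (hR : Convex ℝ R)
    (hPR : ↑P ∩ R ⊆ A ∪ B) {x y : ℝ²} (hx : x ∈ A) (hxR : x ∈ R) (hy : y ∈ B) : y ∉ R := by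
  intro hyR
  have hR' : MutuallyInvisible P (A ∩ R) (B ∩ R) :=
    ⟨inter_subset_left.trans h.subset_left, inter_subset_left.trans h.subset_right,
      h.disjoint.mono inter_subset_left inter_subset_left,
      fun x hx y hy => h.not_visAdj x hx.1 y hy.1⟩
  obtain ⟨a, ha, b, hb, hblock⟩ :=
    hR'.exists_forall_mem_openSegment_notMem ⟨x, hx, hxR⟩ ⟨y, hy, hyR⟩
  obtain ⟨p, hpP, hp⟩ :=
    exists_mem_openSegment_of_not_visAdj (hR'.disjoint.ne_of_mem ha hb) (hR'.not_visAdj a ha b hb)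
  have hpR : p ∈ R := hR.segment_subset ha.2 hb.2 (openSegment_subset_segment ℝ a b hp)
  rcases hPR ⟨hpP, hpR⟩ with hpA | hpB
  · exact hblock p hpP hp (Or.inl ⟨hpA, hpR⟩)
  · exact hblock p hpP hp (Or.inr ⟨hpB, hpR⟩)

/-- `q` sees both `a` and `b`: a blocker would lie strictly between the line `{f = f a}` and the
level of `q`. -/
lemma notMem_union_of_forall_notMem_Ioo (h : MutuallyInvisible P A B) (f : ℝ² →ₗ[ℝ] ℝ)
    {a b q : ℝ²} (ha : a ∈ A) (hb : b ∈ B) (hfab : f a = f b) (hfq : f a < f q)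
    (hgap : ∀ p ∈ P, f p ∉ Ioo (f a) (f q)) : q ∉ A ∪ B := by
  rintro (hqA | hqB)
  · exact h.not_visAdj q hqA b hb (visAdj_of_forall_notMem_Ioo f (hfab ▸ hfq) (hfab ▸ hgap)).symm
  · exact h.not_visAdj a ha q hqB (visAdj_of_forall_notMem_Ioo f hfq hgap)

lemma lt_of_mem_line (h : MutuallyInvisible P A B) (hfg : ∀ x y, f x = f y → g x = g y → x = y)
    {a c : ℝ²} (ha : a ∈ A) (hgac : g a < g c) (hfc : f c = f a) (hc : c ∉ A ∪ B)
    (hS : ∀ p ∈ P, p ∉ A ∪ B → p = c ∨ f p ≠ f a) : ∀ y ∈ B, f y = f a → g c < g y := by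
  intro y hy hfy
  have hR : Convex ℝ (f ⁻¹' {f a} ∩ g ⁻¹' Iio (g c)) :=
    ((convex_singleton _).linear_preimage f).inter ((convex_Iio _).linear_preimage g)
  have hPR : ↑P ∩ (f ⁻¹' {f a} ∩ g ⁻¹' Iio (g c)) ⊆ A ∪ B := by
    rintro p ⟨hp, hpf, hpg⟩
    by_contra hpAB
    rcases hS p hp hpAB with rfl | hne
    · exact lt_irrefl (g p) hpg
    · exact hne hpf
  have hyR := h.notMem_of_convex hR hPR ha ⟨rfl, hgac⟩ hy
  refine (not_lt.1 fun hlt => hyR ⟨hfy, hlt⟩).lt_of_ne fun e => hc (Or.inr ?_)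
  rwa [hfg c y (hfc.trans hfy.symm) e]

lemma exists_ncard_visibleFrom_le_two_of_subset_line (h : MutuallyInvisible P A B)
    (hfg : ∀ x y, f x = f y → g x = g y → x = y) {a c₁ c₂ : ℝ²} (ha : a ∈ A)
    (hA : ∀ x ∈ A, f x = f a) (hB : ∀ y ∈ B, f y = f a → g c₁ < g y) (hgac : g a < g c₁)
    (hfc₁ : f c₁ = f a) (hfc₂ : f c₂ ≠ f a) (hS : ∀ p ∈ P, p ∉ A ∪ B → p = c₁ ∨ p = c₂) :
    ∃ v ∈ P, (visibleFrom P v).ncard ≤ 2 := by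
  obtain ⟨e, ⟨heP, hfe⟩, hemin⟩ := exists_min_image {p ∈ (P : Set ℝ²) | f p = f a} g
    (P.finite_toSet.subset (sep_subset _ _)) ⟨a, h.subset_left ha, rfl⟩
  have hge : g e < g c₁ := (hemin a ⟨h.subset_left ha, rfl⟩).trans_lt hgac
  have heA : e ∈ A := by
    by_contra heA
    have heB : e ∉ B := fun heB => (hB e heB hfe).not_gt hge
    rcases hS e heP (by simp [heA, heB]) with rfl | rfl
    · exact lt_irrefl _ hge
    · exact hfc₂ hfe
  have hsub : visibleFrom P e ⊆ insert c₂ {w ∈ visibleFrom P e | f w = f e} := by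
    intro w hw
    by_cases hwAB : w ∈ A ∪ B
    · rcases hwAB with hwA | hwB
      · exact Or.inr ⟨hw, (hA w hwA).trans (hA e heA).symm⟩
      · exact absurd hw.2 (h.not_visAdj e heA w hwB)
    · rcases hS w hw.1 hwAB with rfl | rfl
      · exact Or.inr ⟨hw, hfc₁.trans hfe.symm⟩
      · exact Or.inl rfl
  have hline := ncard_visibleFrom_sep_le_one hfg fun w hw hfw => hemin w ⟨hw, hfw.trans hfe⟩
  refine ⟨e, heP, (ncard_le_ncard hsub ?_).trans ((ncard_insert_le _ _).trans (by omega))⟩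
  exact ((finite_visibleFrom P e).subset (sep_subset _ _)).insert c₂

/-- The point `c₂` of `P` nearest to the line `{f = f a}` from above sees the whole line, so it
completes the cut to `{c₁, c₂}`; any other point at its height would also see the line. -/
lemma exists_cut_eq_pair (h : MutuallyInvisible P A B) (hS : (↑P \ (A ∪ B)).ncard ≤ 2)
    {a b c₁ q : ℝ²} (ha : a ∈ A) (hb : b ∈ B) (hfab : f a = f b) (hc₁P : c₁ ∈ P)
    (hc₁AB : c₁ ∉ A ∪ B) (hfc₁ : f c₁ = f a) (hq : q ∈ P) (hfq : f a < f q) :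
    ∃ c₂ ∈ P, f a < f c₂ ∧ c₂ ∉ A ∪ B ∧ (∀ p ∈ P, p ∉ A ∪ B → p = c₁ ∨ p = c₂) ∧
      ∀ p ∈ P, f a < f p → p = c₂ ∨ f c₂ < f p := by
  obtain ⟨c₂, ⟨hc₂P, hfc₂⟩, hc₂min⟩ := exists_min_image {p ∈ (P : Set ℝ²) | f a < f p} f
    (P.finite_toSet.subset (sep_subset _ _)) ⟨q, hq, hfq⟩
  have hgap : ∀ p ∈ P, f p ∉ Ioo (f a) (f c₂) := fun p hp hpI =>
    hpI.2.not_ge (hc₂min p ⟨hp, hpI.1⟩)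
  have hc₂AB := h.notMem_union_of_forall_notMem_Ioo f ha hb hfab hfc₂ hgap
  have hS₂ : ∀ p ∈ P, p ∉ A ∪ B → p = c₁ ∨ p = c₂ := by
    have hne : c₁ ≠ c₂ := by rintro rfl; linarith
    have heq : {c₁, c₂} = ↑P \ (A ∪ B) := eq_of_subset_of_ncard_le
      (insert_subset_iff.2 ⟨⟨hc₁P, hc₁AB⟩, singleton_subset_iff.2 ⟨hc₂P, hc₂AB⟩⟩)
      (by rwa [ncard_pair hne]) P.finite_toSet.sdiff
    intro p hp hpAB
    have hp' : p ∈ ↑P \ (A ∪ B) := ⟨hp, hpAB⟩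
    rw [← heq] at hp'
    simpa using hp'
  refine ⟨c₂, hc₂P, hfc₂, hc₂AB, hS₂, fun p hp hfp => ?_⟩
  rcases (hc₂min p ⟨hp, hfp⟩).lt_or_eq with hlt | heq
  · exact Or.inr hlt
  · have hpAB := h.notMem_union_of_forall_notMem_Ioo f ha hb hfab hfp (heq ▸ hgap)
    exact Or.inl ((hS₂ p hp hpAB).resolve_left (by rintro rfl; linarith))

lemma le_of_cut_eq_pair (h : MutuallyInvisible P A B) {a b c₁ c₂ : ℝ²} (ha : a ∈ A)
    (hb : b ∈ B) (hfab : f a = f b) (hfc₁ : f c₁ = f a) (hfc₂ : f a < f c₂)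
    (hS : ∀ p ∈ P, p ∉ A ∪ B → p = c₁ ∨ p = c₂) : ∀ p ∈ P, f a ≤ f p := by
  by_contra! ⟨p, hp, hpa⟩
  obtain ⟨c₃, ⟨hc₃P, hfc₃⟩, hc₃max⟩ := exists_max_image {p ∈ (P : Set ℝ²) | f p < f a} f
    (P.finite_toSet.subset (sep_subset _ _)) ⟨p, hp, hpa⟩
  have hc₃AB := h.notMem_union_of_forall_notMem_Ioo (-f) ha hb (by simp [hfab])
    (by simpa using hfc₃) fun r hr hrI => by
      simp only [LinearMap.neg_apply, mem_Ioo, neg_lt_neg_iff] at hrI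
      exact hrI.2.not_ge (hc₃max r ⟨hr, hrI.1⟩)
  rcases hS c₃ hc₃P hc₃AB with rfl | rfl <;> linarith

lemma forall_eq_or_forall_eq_of_cut_eq_pair (h : MutuallyInvisible P A B) {a c₁ c₂ : ℝ²}
    (hfc₁ : f c₁ = f a) (hfc₂ : f a < f c₂) (hc₂AB : c₂ ∉ A ∪ B)
    (hS : ∀ p ∈ P, p ∉ A ∪ B → p = c₁ ∨ p = c₂) (hbelow : ∀ p ∈ P, f a ≤ f p)
    (habove : ∀ p ∈ P, f a < f p → p = c₂ ∨ f c₂ < f p) :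
    (∀ x ∈ A, f x = f a) ∨ ∀ y ∈ B, f y = f a := by
  have honline : ∀ x ∈ A ∪ B, ¬ f c₂ < f x → f x = f a := by
    intro x hx hxR
    have hxP : x ∈ P := hx.elim (h.subset_left ·) (h.subset_right ·)
    rcases (hbelow x hxP).lt_or_eq with hlt | heq
    · rcases habove x hxP hlt with rfl | hlt'
      · exact absurd hx hc₂AB
      · exact absurd hlt' hxR
    · exact heq.symm
  have hPR : ↑P ∩ f ⁻¹' Ioi (f c₂) ⊆ A ∪ B := by
    rintro p ⟨hp, hpR⟩
    by_contra hpAB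
    rcases hS p hp hpAB with rfl | rfl
    · simp only [mem_preimage, mem_Ioi] at hpR
      linarith
    · exact lt_irrefl (f p) hpR
  by_cases hAR : ∃ x ∈ A, f c₂ < f x
  · obtain ⟨x, hx, hxR⟩ := hAR
    exact Or.inr fun y hy => honline y (Or.inr hy)
      (h.notMem_of_convex ((convex_Ioi _).linear_preimage f) hPR hx hxR hy)
  · push Not at hAR
    exact Or.inl fun x hx => honline x (Or.inl hx) (hAR x hx).not_gt

lemma exists_ncard_visibleFrom_le_two_of_exists_above (h : MutuallyInvisible P A B)
    (hS : (↑P \ (A ∪ B)).ncard ≤ 2) (hfg : ∀ x y, f x = f y → g x = g y → x = y)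
    {a b c₁ q : ℝ²} (ha : a ∈ A) (hb : b ∈ B) (hfab : f a = f b) (hgab : g a < g b)
    (hc₁ : c₁ ∈ openSegment ℝ a b) (hc₁P : c₁ ∈ P) (hc₁AB : c₁ ∉ A ∪ B) (hq : q ∈ P)
    (hfq : f a < f q) : ∃ v ∈ P, (visibleFrom P v).ncard ≤ 2 := by
  have hfc₁ : f c₁ = f a := f.eq_of_mem_openSegment hc₁ hfab
  have hgc₁ : g c₁ ∈ Ioo (g a) (g b) := g.mem_Ioo_of_mem_openSegment hc₁ hgab
  obtain ⟨c₂, hc₂P, hfc₂, hc₂AB, hS₂, habove⟩ :=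
    h.exists_cut_eq_pair hS ha hb hfab hc₁P hc₁AB hfc₁ hq hfq
  have hoff : ∀ p ∈ P, p ∉ A ∪ B → p = c₁ ∨ f p ≠ f a := fun p hp hpAB =>
    (hS₂ p hp hpAB).imp_right fun e => by rw [e]; exact hfc₂.ne'
  have hfg' : ∀ x y, f x = f y → (-g) x = (-g) y → x = y := fun x y h₁ h₂ =>
    hfg x y h₁ (by simpa using h₂)
  rcases h.forall_eq_or_forall_eq_of_cut_eq_pair hfc₁ hfc₂ hc₂AB hS₂
    (h.le_of_cut_eq_pair ha hb hfab hfc₁ hfc₂ hS₂) habove with hAL | hBL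
  · exact h.exists_ncard_visibleFrom_le_two_of_subset_line hfg ha hAL
      (h.lt_of_mem_line hfg ha hgc₁.1 hfc₁ hc₁AB hoff) hgc₁.1 hfc₁ hfc₂.ne' hS₂
  · refine h.symm.exists_ncard_visibleFrom_le_two_of_subset_line hfg' hb
      (fun y hy => (hBL y hy).trans hfab) (fun y hy hfy => ?_) (by simpa using hgc₁.2)
      (hfc₁.trans hfab) (hfab ▸ hfc₂.ne') (by simpa [union_comm] using hS₂)
    simpa using h.symm.lt_of_mem_line hfg' hb (by simpa using hgc₁.2) (hfc₁.trans hfab)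
      (by rwa [union_comm]) (by simpa [union_comm, ← hfab] using hoff) y hy hfy

theorem exists_ncard_visibleFrom_le_two (h : MutuallyInvisible P A B) (hA : A.Nonempty)
    (hB : B.Nonempty) (hS : (↑P \ (A ∪ B)).ncard ≤ 2) : ∃ v ∈ P, (visibleFrom P v).ncard ≤ 2 := by
  obtain ⟨a, ha, b, hb, hblock⟩ := h.exists_forall_mem_openSegment_notMem hA hB
  have hab : a ≠ b := h.disjoint.ne_of_mem ha hb
  obtain ⟨c₁, hc₁P, hc₁⟩ := exists_mem_openSegment_of_not_visAdj hab (h.not_visAdj a ha b hb)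
  have hc₁AB := hblock c₁ hc₁P hc₁
  obtain ⟨f, g, hfg, hfab, hgab⟩ := exists_line_coordinates hab
  by_cases hup : ∃ q ∈ P, f a < f q
  · obtain ⟨q, hq, hfq⟩ := hup
    exact h.exists_ncard_visibleFrom_le_two_of_exists_above hS hfg ha hb hfab hgab hc₁ hc₁P
      hc₁AB hq hfq
  by_cases hdown : ∃ q ∈ P, f q < f a
  · obtain ⟨q, hq, hfq⟩ := hdown
    exact h.exists_ncard_visibleFrom_le_two_of_exists_above (f := -f) hS
      (fun x y h₁ h₂ => hfg x y (by simpa using h₁) h₂) ha hb (by simp [hfab]) hgab hc₁ hc₁P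
      hc₁AB hq (by simpa using hfq)
  push Not at hup hdown
  obtain ⟨v, hv, hv₁⟩ := exists_ncard_visibleFrom_le_one_of_collinear hfg
    ⟨a, h.subset_left ha⟩ fun p hp => (hup p hp).antisymm (hdown p hp)
  exact ⟨v, hv, hv₁.trans one_le_two⟩

end MutuallyInvisible

lemma card_neighborSet_visibilityGraph {P : Finset ℝ²} (v : {p // p ∈ P}) :
    Nat.card ((visibilityGraph P).neighborSet v) = (visibleFrom P v).ncard := by
  rw [Nat.card_coe_set_eq, ← ncard_image_of_injective _ Subtype.val_injective]
  congr 1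
  ext w
  simp [visibleFrom, visibilityGraph, and_comm]

theorem three_le_vertConn_visibilityGraph {P : Finset ℝ²}
    (h : 3 ≤ minDegree' (visibilityGraph P)) : 3 ≤ vertConn (visibilityGraph P) := by
  have hdeg : ∀ v ∈ P, 3 ≤ (visibleFrom P v).ncard := fun v hv =>
    card_neighborSet_visibilityGraph ⟨v, hv⟩ ▸
      ((SimpleGraph.le_minDegree'_iff _ three_ne_zero).1 h).2 ⟨v, hv⟩
  refine SimpleGraph.le_vertConn_of_le_minDegree' _ three_ne_zero h fun S hS hSc =>
    SimpleGraph.connected_induce_of_forall_exists_adj _ hSc fun A _ hAne hBne => ?_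
  by_contra! hno
  have hinv : MutuallyInvisible P (Subtype.val '' A) (Subtype.val '' (Sᶜ \ A)) :=
    ⟨image_subset_iff.2 fun v _ => v.2, image_subset_iff.2 fun v _ => v.2,
      (disjoint_image_iff Subtype.val_injective).2 disjoint_sdiff_right,
      by rintro _ ⟨a, ha, rfl⟩ _ ⟨b, hb, rfl⟩; exact hno a ha b hb⟩
  have hsub : ↑P \ (Subtype.val '' A ∪ Subtype.val '' (Sᶜ \ A)) ⊆ Subtype.val '' S := by
    rintro p ⟨hp, hpAB⟩
    refine ⟨⟨p, hp⟩, ?_, rfl⟩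
    by_contra hpS
    by_cases hpA : ⟨p, hp⟩ ∈ A
    · exact hpAB (Or.inl ⟨_, hpA, rfl⟩)
    · exact hpAB (Or.inr ⟨_, ⟨hpS, hpA⟩, rfl⟩)
  obtain ⟨v, hv, hv₂⟩ := hinv.exists_ncard_visibleFrom_le_two (hAne.image _) (hBne.image _) <| by
    calc _ ≤ (Subtype.val '' S).ncard := ncard_le_ncard hsub (toFinite _)
      _ = Nat.card S := by
        rw [ncard_image_of_injective _ Subtype.val_injective, Nat.card_coe_set_eq]
      _ ≤ 2 := by omega
  linarith [hdeg v hv]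

/-- For a visibility graph `G`, the following are equivalent:
(1) vertex-connectivity at least 3; (2) edge-connectivity at least 3;
(3) minimum degree at least 3. -/
theorem visibility_three_connected_equivalences (P : Finset (ℝ × ℝ)) :
    (3 ≤ vertConn (visibilityGraph P) ↔ 3 ≤ edgeConn (visibilityGraph P)) ∧
    (3 ≤ edgeConn (visibilityGraph P) ↔ 3 ≤ minDegree' (visibilityGraph P)) := by
  have hvert_edge := (visibilityGraph P).le_edgeConn_of_le_vertConn three_ne_zero
  have hedge_deg := (visibilityGraph P).le_minDegree'_of_le_edgeConn three_ne_zero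
  have hdeg_vert := three_le_vertConn_visibilityGraph (P := P)
  exact ⟨⟨hvert_edge, fun h => hdeg_vert (hedge_deg h)⟩,
    ⟨hedge_deg, fun h => hvert_edge (hdeg_vert h)⟩⟩
end

section
/- There exist infinitely many positive integers δ for which there is a finite set of points in the plane, with at most three points on any line and not all points collinear, whose visibility graph has minimum degree δ and vertex-connectivity exactly (2δ+1)/3. -/
/-!
Take the `4s - 1` points `(t, t³)` of the cubic with `t` in `A = [-5s, -4s-1]`,
`B = [3s+1, 4s]` and `C = [1, 2s-1]`. If `z = a x + b y` is a convex combination then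
`a x³ + b y³ - z³ = a b (x - y)² (x + y + z)`, so `(z, z³)` lies on the chord from `(x, x³)` to
`(y, y³)` iff `z` is between `x` and `y` and `x + y + z = 0`; in particular no line meets the
cubic in four points. Hence two points are hidden from each other exactly when one comes from
`A`, the other from `B` (the blocker `-x - y` lies in `C`): the visibility graph is the complete
graph minus the complete bipartite graph between `A` and `B`. Its minimum degree is `3s - 2`,
and the `2s - 1` vertices of `C`, which see everything, form a minimum separator, so the
connectivity is `2s - 1 = (2δ + 1) / 3`.
-/

def cubicPt (t : ℝ) : ℝ × ℝ := (t, t ^ 3)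

lemma cubicPt_injective : Function.Injective cubicPt :=
  fun _ _ h => congrArg Prod.fst h

lemma cubicPt_int_injective : Function.Injective fun n : ℤ => cubicPt n :=
  cubicPt_injective.comp Int.cast_injective

lemma cubicPt_mem_openSegment_iff {x y z : ℝ} (hxy : x ≠ y) :
    cubicPt z ∈ openSegment ℝ (cubicPt x) (cubicPt y) ↔
      z ∈ openSegment ℝ x y ∧ x + y + z = 0 := by
  have cube_defect : ∀ a b : ℝ, 0 < a → 0 < b → a + b = 1 →
      (a * x ^ 3 + b * y ^ 3 = (a * x + b * y) ^ 3 ↔ x + y + (a * x + b * y) = 0) := by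
    intro a b ha hb hab
    obtain rfl : b = 1 - a := by linarith
    have hdefect : a * x ^ 3 + (1 - a) * y ^ 3 - (a * x + (1 - a) * y) ^ 3 =
        a * (1 - a) * (x - y) ^ 2 * (x + y + (a * x + (1 - a) * y)) := by ring
    rw [← sub_eq_zero, hdefect]
    simp [ha.ne', hb.ne', sub_ne_zero.2 hxy]
  simp only [openSegment, cubicPt, Prod.ext_iff, Prod.fst_add, Prod.snd_add,
    Prod.smul_mk, smul_eq_mul]
  constructor
  · rintro ⟨a, b, ha, hb, hab, rfl, hcube⟩
    exact ⟨⟨a, b, ha, hb, hab, rfl⟩, (cube_defect a b ha hb hab).1 hcube⟩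
  · rintro ⟨⟨a, b, ha, hb, hab, rfl⟩, hsum⟩
    exact ⟨a, b, ha, hb, hab, rfl, (cube_defect a b ha hb hab).2 hsum⟩

lemma add_add_eq_zero_of_wbtw_cubicPt {x y z : ℝ} (hxy : x ≠ y) (hyz : y ≠ z) (hxz : x ≠ z)
    (h : Wbtw ℝ (cubicPt x) (cubicPt y) (cubicPt z)) : x + y + z = 0 := by
  have hmem : cubicPt y ∈ openSegment ℝ (cubicPt x) (cubicPt z) :=
    mem_openSegment_of_ne_left_right (cubicPt_injective.ne hxy)
      (cubicPt_injective.ne hyz.symm) (mem_segment_iff_wbtw.2 h)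
  linarith [((cubicPt_mem_openSegment_iff hxz).1 hmem).2]

lemma add_add_eq_zero_of_collinear_cubicPt {x y z : ℝ} (hxy : x ≠ y) (hyz : y ≠ z)
    (hxz : x ≠ z) (h : Collinear ℝ {cubicPt x, cubicPt y, cubicPt z}) : x + y + z = 0 := by
  rcases h.wbtw_or_wbtw_or_wbtw with h | h | h
  · exact add_add_eq_zero_of_wbtw_cubicPt hxy hyz hxz h
  · linarith [add_add_eq_zero_of_wbtw_cubicPt hyz hxz.symm hxy.symm h]
  · linarith [add_add_eq_zero_of_wbtw_cubicPt hxz.symm hxy hyz.symm h]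

lemma atMostCollinear_three_of_subset_range_cubicPt {P : Finset (ℝ × ℝ)}
    (hP : (P : Set (ℝ × ℝ)) ⊆ Set.range cubicPt) : AtMostCollinear P 3 := by
  intro S hSP hS
  rcases le_or_gt S.card 1 with hle | hlt
  · omega
  obtain ⟨u, hu, v, hv, huv⟩ := Finset.one_lt_card.1 hlt
  obtain ⟨x, rfl⟩ := hP (hSP hu)
  obtain ⟨y, rfl⟩ := hP (hSP hv)
  have hxy : x ≠ y := fun h => huv (congrArg cubicPt h)
  -- Two points of the cubic determine the third point on their line.
  suffices hsub : S ⊆ {cubicPt x, cubicPt y, cubicPt (-x - y)} from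
    (Finset.card_le_card hsub).trans Finset.card_le_three
  intro w hw
  obtain ⟨z, rfl⟩ := hP (hSP hw)
  simp only [Finset.mem_insert, Finset.mem_singleton]
  by_cases hzx : z = x; · simp [hzx]
  by_cases hzy : z = y; · simp [hzy]
  have hsum := add_add_eq_zero_of_collinear_cubicPt hxy (Ne.symm hzy) (Ne.symm hzx)
    (hS.subset (by simp [Set.insert_subset_iff, hu, hv, hw]))
  right; right
  congr 1
  linarith

lemma visAdj_image_cubicPt_iff {Z : Finset ℤ} {m n : ℤ} (hmn : m ≠ n) :
    VisAdj (Z.image fun k : ℤ => cubicPt k) (cubicPt m) (cubicPt n) ↔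
      ¬ ∃ k ∈ Z, min m n < k ∧ k < max m n ∧ m + n + k = 0 := by
  have hmn' : (m : ℝ) ≠ n := Int.cast_injective.ne hmn
  simp only [VisAdj, cubicPt_injective.ne hmn', ne_eq, not_false_eq_true, true_and,
    Finset.mem_image, forall_exists_index, and_imp, forall_apply_eq_imp_iff₂,
    cubicPt_mem_openSegment_iff hmn', openSegment_eq_Ioo' hmn', Set.mem_Ioo, not_exists,
    not_and]
  exact forall₂_congr fun k _ => by norm_cast

section Connectivity

variable {V : Type*} {G : SimpleGraph V}

lemma SimpleGraph.induce_connected_of_forall_adj {S : Set V} {u : V} (hu : u ∈ S)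
    (huniv : ∀ v, u ≠ v → G.Adj u v) : (G.induce S).Connected := by
  refine (SimpleGraph.connected_iff_exists_forall_reachable _).2 ⟨⟨u, hu⟩, fun w => ?_⟩
  by_cases huw : u = w.1
  · exact (Subtype.ext huw : (⟨u, hu⟩ : S) = w) ▸ SimpleGraph.Reachable.refl _
  · exact SimpleGraph.Adj.reachable (huniv w.1 huw)

lemma vertConn_eq_ncard_of_forall_adj [Finite V] {U : Set V}
    (hU : ∀ u ∈ U, ∀ v, u ≠ v → G.Adj u v) (hsep : ¬ (G.induce Uᶜ).Preconnected) :
    vertConn G = U.ncard := by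
  refine IsLeast.csInf_eq ⟨⟨U, Nat.card_coe_set_eq U, Or.inl fun h => hsep h.preconnected⟩, ?_⟩
  rintro _ ⟨S, rfl, hS⟩
  rw [Nat.card_coe_set_eq] at hS ⊢
  by_contra! hSU
  obtain ⟨u, huU, huS⟩ := Set.exists_mem_notMem_of_ncard_lt_ncard hSU
  have hUc : 1 < Uᶜ.ncard := by
    contrapose! hsep
    intro x y
    rw [Subtype.ext (Set.ncard_le_one_iff_subsingleton.1 hsep x.2 y.2)]
  have hSU' := Set.ncard_add_ncard_compl S
  have hUU' := Set.ncard_add_ncard_compl U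
  rcases hS with hS | hS
  · exact hS (SimpleGraph.induce_connected_of_forall_adj huS (hU u huU))
  · omega

end Connectivity

lemma Finset.ncard_setOf_val_mem {α : Type*} {P Q : Finset α} (hQP : Q ⊆ P) :
    {v : P | v.1 ∈ Q}.ncard = Q.card := by
  rw [← Set.ncard_coe_finset Q]
  exact Set.ncard_preimage_of_injective_subset_range Subtype.val_injective
    (by simpa using hQP)

section CompleteMinusBiclique

variable {V : Type*} {A B : Set V}

def completeMinusBiclique (A B : Set V) : SimpleGraph V :=
  ⊤ \ SimpleGraph.fromRel fun u v => u ∈ A ∧ v ∈ B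

lemma completeMinusBiclique_adj {u v : V} :
    (completeMinusBiclique A B).Adj u v ↔ u ≠ v ∧ ¬ ((u ∈ A ∧ v ∈ B) ∨ (v ∈ A ∧ u ∈ B)) := by
  simp [completeMinusBiclique, SimpleGraph.fromRel_adj]
  tauto

lemma completeMinusBiclique_comm : completeMinusBiclique A B = completeMinusBiclique B A := by
  ext u v
  simp only [completeMinusBiclique_adj]
  tauto

lemma neighborSet_completeMinusBiclique_of_mem_left (hAB : Disjoint A B) {v : V} (hv : v ∈ A) :
    (completeMinusBiclique A B).neighborSet v = (insert v B)ᶜ := by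
  ext u
  have hvB : v ∉ B := Set.disjoint_left.1 hAB hv
  simp only [SimpleGraph.mem_neighborSet, completeMinusBiclique_adj, Set.mem_compl_iff,
    Set.mem_insert_iff]
  tauto

lemma neighborSet_completeMinusBiclique_of_notMem {v : V} (hvA : v ∉ A) (hvB : v ∉ B) :
    (completeMinusBiclique A B).neighborSet v = {v}ᶜ := by
  ext u
  simp only [SimpleGraph.mem_neighborSet, completeMinusBiclique_adj, Set.mem_compl_iff,
    Set.mem_singleton_iff]
  tauto

variable [Finite V]

lemma card_neighborSet_completeMinusBiclique_of_mem_left (hAB : Disjoint A B) {v : V}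
    (hv : v ∈ A) :
    Nat.card ((completeMinusBiclique A B).neighborSet v) = Nat.card V - (B.ncard + 1) := by
  rw [Nat.card_coe_set_eq, neighborSet_completeMinusBiclique_of_mem_left hAB hv, Set.ncard_compl,
    Set.ncard_insert_of_notMem (Set.disjoint_left.1 hAB hv)]

lemma card_neighborSet_completeMinusBiclique_of_notMem {v : V} (hvA : v ∉ A) (hvB : v ∉ B) :
    Nat.card ((completeMinusBiclique A B).neighborSet v) = Nat.card V - 1 := by
  rw [Nat.card_coe_set_eq, neighborSet_completeMinusBiclique_of_notMem hvA hvB, Set.ncard_compl,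
    Set.ncard_singleton]

lemma minDegree'_completeMinusBiclique (hAB : Disjoint A B) (hA : A.Nonempty)
    (hB : B.Nonempty) :
    minDegree' (completeMinusBiclique A B) = Nat.card V - (max A.ncard B.ncard + 1) := by
  have degA {v} (hv : v ∈ A) := card_neighborSet_completeMinusBiclique_of_mem_left hAB hv
  have degB {v} (hv : v ∈ B) := completeMinusBiclique_comm (A := A) ▸
    card_neighborSet_completeMinusBiclique_of_mem_left hAB.symm hv
  refine IsLeast.csInf_eq ⟨?_, ?_⟩
  · obtain ⟨a, ha⟩ := hA
    obtain ⟨b, hb⟩ := hB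
    rcases le_total A.ncard B.ncard with h | h
    · exact ⟨a, by rw [degA ha, max_eq_right h]⟩
    · exact ⟨b, by rw [degB hb, max_eq_left h]⟩
  · rintro _ ⟨v, rfl⟩
    by_cases hvA : v ∈ A
    · rw [degA hvA]; omega
    by_cases hvB : v ∈ B
    · rw [degB hvB]; omega
    rw [card_neighborSet_completeMinusBiclique_of_notMem hvA hvB]
    omega

lemma vertConn_completeMinusBiclique (hAB : Disjoint A B) (hA : A.Nonempty) (hB : B.Nonempty) :
    vertConn (completeMinusBiclique A B) = (A ∪ B)ᶜ.ncard := by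
  refine vertConn_eq_ncard_of_forall_adj (fun u hu v huv => ?_) ?_
  · simp only [Set.mem_compl_iff, Set.mem_union, not_or] at hu
    exact completeMinusBiclique_adj.2 ⟨huv, by tauto⟩
  · obtain ⟨a, ha⟩ := hA
    obtain ⟨b, hb⟩ := hB
    intro hconn
    -- A walk from `A` to `B` inside `A ∪ B` would have to use an edge between `A` and `B`.
    obtain ⟨w⟩ := hconn ⟨a, by simp [ha]⟩ ⟨b, by simp [hb]⟩
    obtain ⟨d, -, hdA, hdB⟩ := w.exists_boundary_dart {x | x.1 ∈ A} ha
      (Set.disjoint_right.1 hAB hb)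
    have hdAB : d.snd.1 ∈ A ∪ B := by simpa only [compl_compl] using d.snd.2
    exact (completeMinusBiclique_adj.1 d.adj).2 (Or.inl ⟨hdA, hdAB.resolve_left hdB⟩)

end CompleteMinusBiclique

section Construction

variable (s : ℕ)

noncomputable def paramsA : Finset ℤ := Finset.Icc (-5 * s) (-4 * s - 1)
noncomputable def paramsB : Finset ℤ := Finset.Icc (3 * s + 1) (4 * s)
noncomputable def paramsC : Finset ℤ := Finset.Icc 1 (2 * s - 1)
noncomputable def params : Finset ℤ := paramsA s ∪ paramsB s ∪ paramsC s

noncomputable def cubicConfig : Finset (ℝ × ℝ) := (params s).image fun n : ℤ => cubicPt n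

noncomputable def cubicConfigVerts (T : Finset ℤ) : Set (cubicConfig s) :=
  {v | v.1 ∈ T.image fun n : ℤ => cubicPt n}

variable {s}

lemma disjoint_paramsA_paramsB : Disjoint (paramsA s) (paramsB s) := by
  simp only [paramsA, paramsB, Finset.disjoint_left, Finset.mem_Icc]; omega

lemma exists_blocker_iff {m n : ℤ} (hm : m ∈ params s) (hn : n ∈ params s) :
    (∃ k ∈ params s, min m n < k ∧ k < max m n ∧ m + n + k = 0) ↔
      (m ∈ paramsA s ∧ n ∈ paramsB s) ∨ (n ∈ paramsA s ∧ m ∈ paramsB s) := by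
  simp only [params, paramsA, paramsB, paramsC, Finset.mem_union, Finset.mem_Icc] at hm hn ⊢
  constructor
  · rintro ⟨k, hk, hbetween⟩
    omega
  · intro h
    exact ⟨-m - n, by omega⟩

lemma visibilityGraph_cubicConfig :
    visibilityGraph (cubicConfig s) =
      completeMinusBiclique (cubicConfigVerts s (paramsA s)) (cubicConfigVerts s (paramsB s)) := by
  ext ⟨_, hu⟩ ⟨_, hv⟩
  obtain ⟨m, hm, rfl⟩ := Finset.mem_image.1 hu
  obtain ⟨n, hn, rfl⟩ := Finset.mem_image.1 hv
  rw [completeMinusBiclique_adj]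
  simp only [cubicConfigVerts, Set.mem_ofPred_eq, cubicPt_int_injective.mem_finset_image, ne_eq,
    Subtype.mk.injEq, cubicPt_int_injective.eq_iff]
  by_cases hmn : m = n
  · simp [hmn, visibilityGraph, VisAdj]
  · rw [← exists_blocker_iff hm hn]
    simp only [hmn, not_false_eq_true, true_and]
    exact visAdj_image_cubicPt_iff hmn

lemma card_paramsA : (paramsA s).card = s := by simp [paramsA]; omega
lemma card_paramsB : (paramsB s).card = s := by simp [paramsB]; omega

lemma card_params (hs : 1 ≤ s) : (params s).card = 4 * s - 1 := by
  have hABC : Disjoint (paramsA s ∪ paramsB s) (paramsC s) := by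
    simp only [paramsA, paramsB, paramsC, Finset.disjoint_left, Finset.mem_union,
      Finset.mem_Icc]; omega
  rw [params, Finset.card_union_of_disjoint hABC,
    Finset.card_union_of_disjoint disjoint_paramsA_paramsB, card_paramsA, card_paramsB, paramsC,
    Int.card_Icc]
  omega

lemma card_cubicConfig (hs : 1 ≤ s) : Nat.card (cubicConfig s) = 4 * s - 1 := by
  rw [Nat.card_eq_fintype_card, Fintype.card_coe, cubicConfig,
    Finset.card_image_of_injective _ cubicPt_int_injective, card_params hs]

lemma ncard_cubicConfigVerts {T : Finset ℤ} (hT : T ⊆ params s) :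
    (cubicConfigVerts s T).ncard = T.card :=
  (Finset.ncard_setOf_val_mem (Finset.image_subset_image hT)).trans
    (Finset.card_image_of_injective _ cubicPt_int_injective)

lemma ncard_cubicConfigVerts_paramsA : (cubicConfigVerts s (paramsA s)).ncard = s := by
  rw [ncard_cubicConfigVerts (Finset.subset_union_left.trans Finset.subset_union_left),
    card_paramsA]

lemma ncard_cubicConfigVerts_paramsB : (cubicConfigVerts s (paramsB s)).ncard = s := by
  rw [ncard_cubicConfigVerts (Finset.subset_union_right.trans Finset.subset_union_left),
    card_paramsB]

lemma disjoint_cubicConfigVerts :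
    Disjoint (cubicConfigVerts s (paramsA s)) (cubicConfigVerts s (paramsB s)) :=
  Disjoint.preimage _ (Finset.disjoint_coe.2
    ((Finset.disjoint_image cubicPt_int_injective).2 disjoint_paramsA_paramsB))

lemma minDegree'_visibilityGraph_cubicConfig (hs : 1 ≤ s) :
    minDegree' (visibilityGraph (cubicConfig s)) = 3 * s - 2 := by
  rw [visibilityGraph_cubicConfig, minDegree'_completeMinusBiclique disjoint_cubicConfigVerts
    (Set.nonempty_of_ncard_ne_zero (by rw [ncard_cubicConfigVerts_paramsA]; omega))
    (Set.nonempty_of_ncard_ne_zero (by rw [ncard_cubicConfigVerts_paramsB]; omega)),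
    card_cubicConfig hs, ncard_cubicConfigVerts_paramsA, ncard_cubicConfigVerts_paramsB]
  omega

lemma vertConn_visibilityGraph_cubicConfig (hs : 1 ≤ s) :
    vertConn (visibilityGraph (cubicConfig s)) = 2 * s - 1 := by
  rw [visibilityGraph_cubicConfig, vertConn_completeMinusBiclique disjoint_cubicConfigVerts
    (Set.nonempty_of_ncard_ne_zero (by rw [ncard_cubicConfigVerts_paramsA]; omega))
    (Set.nonempty_of_ncard_ne_zero (by rw [ncard_cubicConfigVerts_paramsB]; omega)),
    Set.ncard_compl, Set.ncard_union_eq disjoint_cubicConfigVerts, card_cubicConfig hs,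
    ncard_cubicConfigVerts_paramsA, ncard_cubicConfigVerts_paramsB]
  omega

lemma atMostCollinear_cubicConfig : AtMostCollinear (cubicConfig s) 3 :=
  atMostCollinear_three_of_subset_range_cubicPt fun _ hp => by
    obtain ⟨n, -, rfl⟩ := Finset.mem_image.1 hp
    exact ⟨n, rfl⟩

lemma not_collinear_cubicConfig (hs : 2 ≤ s) : ¬ Collinear ℝ (cubicConfig s : Set (ℝ × ℝ)) := by
  intro hcol
  have hmem : ∀ n : ℤ, 1 ≤ n → n ≤ 3 → cubicPt n ∈ (cubicConfig s : Set (ℝ × ℝ)) :=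
    fun n h1 h3 => Finset.mem_image_of_mem _ (by simp [params, paramsC]; omega)
  have hsum := add_add_eq_zero_of_collinear_cubicPt (x := ((1 : ℤ) : ℝ)) (y := ((2 : ℤ) : ℝ))
    (z := ((3 : ℤ) : ℝ)) (by norm_num) (by norm_num) (by norm_num)
    (hcol.subset (Set.insert_subset_iff.2 ⟨hmem 1 le_rfl (by norm_num),
      Set.insert_subset_iff.2 ⟨hmem 2 (by norm_num) (by norm_num),
        Set.singleton_subset_iff.2 (hmem 3 (by norm_num) le_rfl)⟩⟩))
  norm_num at hsum

end Construction

/-- There are infinitely many positive integers `δ` for which there is a finite planar point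
set, with at most three points on any line and not all points collinear, whose visibility
graph has minimum degree `δ` and vertex-connectivity exactly `(2δ+1)/3`. -/
theorem visibility_connectivity_two_thirds_tight :
    ∀ N : ℕ, ∃ δ : ℕ, N ≤ δ ∧ 0 < δ ∧
      ∃ P : Finset (ℝ × ℝ),
        ¬ Collinear ℝ (P : Set (ℝ × ℝ)) ∧ AtMostCollinear P 3 ∧
        minDegree' (visibilityGraph P) = δ ∧
        (vertConn (visibilityGraph P) : ℝ) = (2 * (δ : ℝ) + 1) / 3 := by
  intro N
  have hs : 2 ≤ N + 2 := by omega
  refine ⟨3 * (N + 2) - 2, by omega, by omega, cubicConfig (N + 2), not_collinear_cubicConfig hs,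
    atMostCollinear_cubicConfig, minDegree'_visibilityGraph_cubicConfig (by omega), ?_⟩
  rw [vertConn_visibilityGraph_cubicConfig (by omega),
    show 2 * (N + 2) - 1 = 2 * N + 3 by omega, show 3 * (N + 2) - 2 = 3 * N + 4 by omega]
  push_cast
  ring
end
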